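/- arXiv:1901.00914 — 8 statements merged into one kernel-verified Lean document; each statement's English description precedes it below -/
import Mathlib

section
/- Let y_1,...,y_m ∈ ℝ, a, b ∈ ℝ, λ > 0, M_y > 0, and suppose that for all 1 ≤ k ≤ l ≤ m one has |∑_{i=k}^{l} y_i| ≤ M_y·√(l−k+1). Let (x̂_1,...,x̂_m) be the minimizer over ℝ^m of G(x_1,...,x_m) = ∑_{i=1}^m (x_i − y_i)² + λ(|x_1 − a| + |x_m − b| + ∑_{i=1}^{m−1} |x_i − x_{i+1}|). Then for every 1 ≤ i ≤ m, |x̂_i| ≤ max( M_y/√i, M_y/√(m+1−i), M_y²/(4λ), 2λ/m + 2M_y/√m ). -/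
/-!
Fix `i` and let `[p, q] ∋ i` be the maximal block on which `x̂ ≥ x̂ i`. Lowering `x̂` by a small
`ε > 0` on the block changes `G` by `-2ε ∑_{[p,q]} (x̂ j - y j) + O(ε²)` plus, at each end of the
block, `+λε` if that end is `1` or `m` and `-λε` otherwise (there `x̂` drops when leaving the
block). Minimality of `x̂` therefore gives `n x̂ i ≤ ∑_{[p,q]} y j + λ (s_p + s_q) / 2
≤ M_y √n + λ (s_p + s_q) / 2` with `n = q - p + 1` and `s = ±1`, and the four sign patterns
produce the four terms of the maximum (for an interior block, by AM-GM). The lower bound is the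
upper bound for the data `(-y, -a, -b)`, whose minimizer is `-x̂`.
-/
open Finset Filter Topology

noncomputable def fusedLasso (m : ℕ) (y : ℕ → ℝ) (a b lam : ℝ) (z : ℕ → ℝ) : ℝ :=
  ∑ i ∈ Icc 1 m, (z i - y i) ^ 2
    + lam * (|z 1 - a| + |z m - b| + ∑ i ∈ Icc 1 (m - 1), |z i - z (i + 1)|)

def withBoundary (a b : ℝ) (m : ℕ) (x : ℕ → ℝ) (j : ℕ) : ℝ :=
  if j = 0 then a else if j = m + 1 then b else x j

def shiftBlock (p q : ℕ) (ε : ℝ) (x : ℕ → ℝ) (j : ℕ) : ℝ :=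
  if j ∈ Icc p q then x j - ε else x j

lemma withBoundary_of_mem {a b : ℝ} {m j : ℕ} (x : ℕ → ℝ) (hj : j ∈ Icc 1 m) :
    withBoundary a b m x j = x j := by
  rw [mem_Icc] at hj
  simp only [withBoundary, if_neg (show j ≠ 0 by omega), if_neg (show j ≠ m + 1 by omega)]

lemma penalty_eq_sum_withBoundary {m : ℕ} (hm : 1 ≤ m) (a b : ℝ) (x : ℕ → ℝ) :
    |x 1 - a| + |x m - b| + ∑ i ∈ Icc 1 (m - 1), |x i - x (i + 1)| =
      ∑ i ∈ Icc 0 m, |withBoundary a b m x i - withBoundary a b m x (i + 1)| := by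
  obtain ⟨k, rfl⟩ : ∃ k, m = k + 1 := ⟨m - 1, by omega⟩
  have hmid : ∀ i ∈ Icc 1 k,
      |withBoundary a b (k + 1) x i - withBoundary a b (k + 1) x (i + 1)| =
        |x i - x (i + 1)| := fun i hi => by
    rw [mem_Icc] at hi
    rw [withBoundary_of_mem x (by rw [mem_Icc]; omega),
      withBoundary_of_mem x (by rw [mem_Icc]; omega)]
  rw [Nat.add_sub_cancel, sum_Icc_succ_top (by omega),
    ← add_sum_Ioc_eq_sum_Icc (a := 0) (by omega), ← Icc_add_one_left_eq_Ioc, zero_add,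
    sum_congr rfl hmid]
  simp only [withBoundary, ↓reduceIte, Nat.add_one_ne_zero, one_ne_zero,
    if_neg (show 1 ≠ k + 1 + 1 by omega), if_neg (show k + 1 ≠ k + 1 + 1 by omega),
    abs_sub_comm a]
  ring

lemma withBoundary_shiftBlock {a b ε : ℝ} {m p q : ℕ} (hp : 1 ≤ p) (hq : q ≤ m)
    (x : ℕ → ℝ) :
    withBoundary a b m (shiftBlock p q ε x) = shiftBlock p q ε (withBoundary a b m x) := by
  ext j
  simp only [withBoundary, shiftBlock, mem_Icc]
  split_ifs <;> first | rfl | omega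

lemma sum_abs_sub_shiftBlock {s : Finset ℕ} {p q : ℕ} (hp : 1 ≤ p) (hpq : p ≤ q)
    (hps : p - 1 ∈ s) (hqs : q ∈ s) (ε : ℝ) (u : ℕ → ℝ) :
    ∑ j ∈ s, |shiftBlock p q ε u j - shiftBlock p q ε u (j + 1)| =
      ∑ j ∈ s, |u j - u (j + 1)|
        + (|u (p - 1) - u p + ε| - |u (p - 1) - u p|)
        + (|u q - u (q + 1) - ε| - |u q - u (q + 1)|) := by
  have hrest : ∀ j ∈ s, j ≠ p - 1 ∧ j ≠ q →
      |shiftBlock p q ε u j - shiftBlock p q ε u (j + 1)| - |u j - u (j + 1)| = 0 := by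
    intro j _ hj
    suffices shiftBlock p q ε u j - shiftBlock p q ε u (j + 1) = u j - u (j + 1) by
      rw [this, sub_self]
    simp only [shiftBlock, mem_Icc]
    split_ifs <;> first | omega | ring
  have hchange := sum_eq_add_of_mem _ _ hps hqs (by omega) hrest
  rw [sum_sub_distrib] at hchange
  have hleft :
      shiftBlock p q ε u (p - 1) - shiftBlock p q ε u (p - 1 + 1) = u (p - 1) - u p + ε := by
    simp only [shiftBlock, mem_Icc, Nat.sub_add_cancel hp]
    rw [if_neg (by omega), if_pos (by omega)]; ring
  have hright : shiftBlock p q ε u q - shiftBlock p q ε u (q + 1) = u q - u (q + 1) - ε := by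
    simp only [shiftBlock, mem_Icc]
    rw [if_pos (by omega), if_neg (by omega)]; ring
  rw [hleft, hright, Nat.sub_add_cancel hp] at hchange
  linarith

lemma sum_sq_shiftBlock {m p q : ℕ} (hp : 1 ≤ p) (hq : q ≤ m) (ε : ℝ) (x y : ℕ → ℝ) :
    ∑ j ∈ Icc 1 m, (shiftBlock p q ε x j - y j) ^ 2 =
      ∑ j ∈ Icc 1 m, (x j - y j) ^ 2 - 2 * ε * ∑ j ∈ Icc p q, (x j - y j)
        + (#(Icc p q) : ℝ) * ε ^ 2 := by
  have hsplit : ∀ j, (shiftBlock p q ε x j - y j) ^ 2 = (x j - y j) ^ 2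
      + if j ∈ Icc p q then ε ^ 2 - 2 * ε * (x j - y j) else 0 := by
    intro j
    unfold shiftBlock
    split_ifs <;> ring
  have hsub : Icc 1 m ∩ Icc p q = Icc p q := inter_eq_right.2 (Icc_subset_Icc hp hq)
  rw [sum_congr rfl fun j _ => hsplit j, sum_add_distrib, sum_ite_mem, hsub, sum_sub_distrib,
    sum_const, nsmul_eq_mul, ← mul_sum]
  ring

lemma fusedLasso_shiftBlock_le {m p q : ℕ} {y : ℕ → ℝ} {a b lam ε : ℝ} (hlam : 0 ≤ lam)
    (hε : 0 < ε) (hp : 1 ≤ p) (hpq : p ≤ q) (hq : q ≤ m) {x : ℕ → ℝ}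
    (hleft : p ≠ 1 → ε ≤ x p - x (p - 1)) (hright : q ≠ m → ε ≤ x q - x (q + 1)) :
    fusedLasso m y a b lam (shiftBlock p q ε x) ≤
      fusedLasso m y a b lam x - 2 * ε * ∑ j ∈ Icc p q, (x j - y j)
        + (#(Icc p q) : ℝ) * ε ^ 2
        + lam * ((if p = 1 then 1 else -1) + (if q = m then 1 else -1)) * ε := by
  set u := withBoundary a b m x
  have hedgeL : |u (p - 1) - u p + ε| - |u (p - 1) - u p| ≤ (if p = 1 then 1 else -1) * ε := by
    split_ifs with hp1
    · linarith [abs_add_le (u (p - 1) - u p) ε, abs_of_pos hε]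
    · have hgap := hleft hp1
      have hu₁ : u (p - 1) = x (p - 1) := withBoundary_of_mem x (by rw [mem_Icc]; omega)
      have hu₂ : u p = x p := withBoundary_of_mem x (by rw [mem_Icc]; omega)
      rw [hu₁, hu₂, abs_of_nonpos (by linarith), abs_of_nonpos (by linarith)]
      linarith
  have hedgeR : |u q - u (q + 1) - ε| - |u q - u (q + 1)| ≤ (if q = m then 1 else -1) * ε := by
    split_ifs with hqm
    · linarith [abs_sub (u q - u (q + 1)) ε, abs_of_pos hε]
    · have hgap := hright hqm
      have hu₁ : u q = x q := withBoundary_of_mem x (by rw [mem_Icc]; omega)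
      have hu₂ : u (q + 1) = x (q + 1) := withBoundary_of_mem x (by rw [mem_Icc]; omega)
      rw [hu₁, hu₂, abs_of_nonneg (by linarith), abs_of_nonneg (by linarith)]
      linarith
  have hpenalty := sum_abs_sub_shiftBlock (s := Icc 0 m) hp hpq (by rw [mem_Icc]; omega)
    (by rw [mem_Icc]; omega) ε u
  have hm : 1 ≤ m := hp.trans (hpq.trans hq)
  rw [← withBoundary_shiftBlock hp hq, ← penalty_eq_sum_withBoundary hm,
    ← penalty_eq_sum_withBoundary hm] at hpenalty
  unfold fusedLasso
  rw [sum_sq_shiftBlock hp hq, hpenalty]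
  linarith [mul_le_mul_of_nonneg_left (add_le_add hedgeL hedgeR) hlam]

lemma fusedLasso_block_optimality {m p q : ℕ} {y : ℕ → ℝ} {a b lam : ℝ} (hlam : 0 ≤ lam)
    {x : ℕ → ℝ} (hmin : ∀ z, fusedLasso m y a b lam x ≤ fusedLasso m y a b lam z)
    (hp : 1 ≤ p) (hpq : p ≤ q) (hq : q ≤ m)
    (hleft : p ≠ 1 → x (p - 1) < x p) (hright : q ≠ m → x (q + 1) < x q) :
    2 * ∑ j ∈ Icc p q, (x j - y j) ≤
      lam * ((if p = 1 then 1 else -1) + (if q = m then 1 else -1)) := by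
  set c := lam * ((if p = 1 then (1 : ℝ) else -1) + (if q = m then 1 else -1))
  set n : ℝ := (#(Icc p q) : ℝ)
  have hgap {P : Prop} {d : ℝ} (hd : P → 0 < d) : ∀ᶠ ε in 𝓝[>] (0 : ℝ), P → ε ≤ d := by
    by_cases hP : P
    · exact ((eventually_le_nhds (hd hP)).filter_mono nhdsWithin_le_nhds).mono fun _ h _ => h
    · exact Eventually.of_forall fun _ h => absurd h hP
  have hlim : Tendsto (fun ε => c + n * ε) (𝓝[>] 0) (𝓝 c) :=
    ((show Continuous fun ε : ℝ => c + n * ε by fun_prop).tendsto' 0 c (by simp)).mono_left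
      nhdsWithin_le_nhds
  refine ge_of_tendsto hlim ?_
  filter_upwards [self_mem_nhdsWithin, hgap fun h => sub_pos.2 (hleft h),
    hgap fun h => sub_pos.2 (hright h)] with ε hε hεL hεR
  have hdescent := (hmin _).trans (fusedLasso_shiftBlock_le hlam hε hp hpq hq hεL hεR)
  have : ε * (2 * ∑ j ∈ Icc p q, (x j - y j)) ≤ ε * (c + n * ε) := by linarith
  exact le_of_mul_le_mul_left this hε

lemma exists_block_ge {f : ℕ → ℝ} {i m : ℕ} (hi : 1 ≤ i) (him : i ≤ m) :
    ∃ p q, 1 ≤ p ∧ p ≤ i ∧ i ≤ q ∧ q ≤ m ∧ (∀ j ∈ Icc p q, f i ≤ f j) ∧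
      (p ≠ 1 → f (p - 1) < f p) ∧ (q ≠ m → f (q + 1) < f q) := by
  classical
  have hself : ∀ j ∈ Icc i i, f i ≤ f j := fun j hj => by
    rw [Icc_self, mem_singleton] at hj
    rw [hj]
  have hP : ∃ p, 1 ≤ p ∧ ∀ j ∈ Icc p i, f i ≤ f j := ⟨i, hi, hself⟩
  let P q := ∀ j ∈ Icc i q, f i ≤ f j
  let q := Nat.findGreatest P m
  obtain ⟨hp1, hpge⟩ := Nat.find_spec hP
  have hpi : Nat.find hP ≤ i := Nat.find_min' hP ⟨hi, hself⟩
  have hiq : i ≤ q := Nat.le_findGreatest him hself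
  have hqge : ∀ j ∈ Icc i q, f i ≤ f j := Nat.findGreatest_spec (P := P) him hself
  refine ⟨Nat.find hP, q, hp1, hpi, hiq, Nat.findGreatest_le m, fun j hj => ?_, fun hne => ?_,
    fun hne => ?_⟩
  · rw [mem_Icc] at hj
    rcases le_total j i with hji | hij
    · exact hpge j (mem_Icc.2 ⟨hj.1, hji⟩)
    · exact hqge j (mem_Icc.2 ⟨hij, hj.2⟩)
  · have hfail := Nat.find_min hP (show Nat.find hP - 1 < Nat.find hP by omega)
    push Not at hfail
    obtain ⟨j, hj, hlt⟩ := hfail (by omega)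
    rw [mem_Icc] at hj
    obtain rfl : j = Nat.find hP - 1 := by
      by_contra hne'
      exact (hpge j (mem_Icc.2 ⟨by omega, hj.2⟩)).not_gt hlt
    exact hlt.trans_le (hpge _ (mem_Icc.2 ⟨by omega, hpi⟩))
  · have hfail := Nat.findGreatest_is_greatest (show q < q + 1 by omega)
      (show q + 1 ≤ m by have := Nat.findGreatest_le (P := P) m; omega)
    simp only [P, not_forall, not_le, exists_prop] at hfail
    obtain ⟨j, hj, hlt⟩ := hfail
    rw [mem_Icc] at hj
    obtain rfl : j = q + 1 := by
      by_contra hne'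
      exact (hqge j (mem_Icc.2 ⟨hj.1, by omega⟩)).not_gt hlt
    exact hlt.trans_le (hqge _ (mem_Icc.2 ⟨hiq, le_rfl⟩))

lemma le_div_sqrt_of_mul_le_mul_sqrt {M t n k : ℝ} (hM : 0 ≤ M) (hk : 0 < k) (hkn : k ≤ n)
    (h : n * t ≤ M * √n) : t ≤ M / √k := by
  have hsqrt : 0 < √n := Real.sqrt_pos.2 (hk.trans_le hkn)
  have hn : √n * √n = n := Real.mul_self_sqrt (hk.le.trans hkn)
  have hmul : √n * (√n * t) ≤ √n * M := by rw [← mul_assoc, hn]; linarith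
  calc t ≤ M / √n := (le_div_iff₀' hsqrt).2 (le_of_mul_le_mul_left hmul hsqrt)
    _ ≤ M / √k := div_le_div_of_nonneg_left hM (Real.sqrt_pos.2 hk) (Real.sqrt_le_sqrt hkn)

lemma le_sq_div_of_mul_le_mul_sqrt_sub {M t n lam : ℝ} (hlam : 0 < lam) (hn : 0 < n)
    (h : n * t ≤ M * √n - lam) : t ≤ M ^ 2 / (4 * lam) := by
  have hsq := Real.sq_sqrt hn.le
  have hmul : n * (t * (4 * lam)) ≤ n * M ^ 2 := by
    nlinarith [sq_nonneg (M * √n - 2 * lam)]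
  exact (le_div_iff₀ (by positivity)).2 (le_of_mul_le_mul_left hmul hn)

lemma le_add_div_of_mul_le_mul_sqrt_add {M t n lam : ℝ} (hM : 0 ≤ M) (hlam : 0 ≤ lam)
    (hn : 0 < n) (h : n * t ≤ M * √n + lam) : t ≤ 2 * lam / n + 2 * M / √n := by
  have hsqrt : 0 < √n := Real.sqrt_pos.2 hn
  have hexpand : n * (2 * lam / n + 2 * M / √n) = 2 * lam + 2 * M * √n := by
    field_simp
    linear_combination -M * Real.mul_self_sqrt hn.le
  refine le_of_mul_le_mul_left ?_ hn
  rw [hexpand]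
  nlinarith [mul_nonneg hM hsqrt.le]

lemma fusedLasso_block_mean_le {m p q i : ℕ} {y : ℕ → ℝ} {a b lam My : ℝ} (hlam : 0 ≤ lam)
    (hy : ∀ k l : ℕ, 1 ≤ k → k ≤ l → l ≤ m →
      |∑ j ∈ Icc k l, y j| ≤ My * √(l - k + 1))
    {x : ℕ → ℝ} (hmin : ∀ z, fusedLasso m y a b lam x ≤ fusedLasso m y a b lam z)
    (hp : 1 ≤ p) (hpq : p ≤ q) (hq : q ≤ m) (hge : ∀ j ∈ Icc p q, x i ≤ x j)
    (hleft : p ≠ 1 → x (p - 1) < x p) (hright : q ≠ m → x (q + 1) < x q) :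
    ((q : ℝ) - p + 1) * x i ≤
      My * √((q : ℝ) - p + 1)
        + lam * ((if p = 1 then 1 else -1) + (if q = m then 1 else -1)) / 2 := by
  have hopt := fusedLasso_block_optimality hlam hmin hp hpq hq hleft hright
  have hsum := card_nsmul_le_sum _ _ _ hge
  have hcard : ((#(Icc p q) : ℕ) : ℝ) = q - p + 1 := by
    rw [Nat.card_Icc, Nat.cast_sub (by omega)]
    push_cast
    ring
  rw [nsmul_eq_mul, hcard] at hsum
  rw [sum_sub_distrib] at hopt
  linarith [(abs_le.1 (hy p q hp hpq hq)).2]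

lemma fusedLasso_minimizer_le {m i : ℕ} {y : ℕ → ℝ} {a b lam My : ℝ} (hlam : 0 < lam)
    (hMy : 0 ≤ My)
    (hy : ∀ k l : ℕ, 1 ≤ k → k ≤ l → l ≤ m →
      |∑ j ∈ Icc k l, y j| ≤ My * √(l - k + 1))
    {x : ℕ → ℝ} (hmin : ∀ z, fusedLasso m y a b lam x ≤ fusedLasso m y a b lam z)
    (hi : 1 ≤ i) (him : i ≤ m) :
    x i ≤ max (max (My / √i) (My / √(m + 1 - i)))
        (max (My ^ 2 / (4 * lam)) (2 * lam / m + 2 * My / √m)) := by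
  obtain ⟨p, q, hp, hpi, hiq, hqm, hge, hleft, hright⟩ := exists_block_ge (f := x) hi him
  have hmean := fusedLasso_block_mean_le hlam.le hy hmin hp (hpi.trans hiq) hqm hge hleft hright
  have hpi' : (p : ℝ) ≤ i := by exact_mod_cast hpi
  have hiq' : (i : ℝ) ≤ q := by exact_mod_cast hiq
  have hi' : (1 : ℝ) ≤ i := by exact_mod_cast hi
  have him' : (i : ℝ) ≤ m := by exact_mod_cast him
  by_cases hp1 : p = 1 <;> by_cases hqm1 : q = m <;>
    simp only [hp1, hqm1, ↓reduceIte, Nat.cast_one] at hmean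
  · simp only [sub_add_cancel] at hmean
    exact le_max_of_le_right <| le_max_of_le_right <|
      le_add_div_of_mul_le_mul_sqrt_add hMy hlam.le (by linarith) (by linarith)
  · exact le_max_of_le_left <| le_max_of_le_left <|
      le_div_sqrt_of_mul_le_mul_sqrt (n := q - 1 + 1) hMy (by linarith) (by linarith) (by linarith)
  · rw [hqm1] at hiq'
    exact le_max_of_le_left <| le_max_of_le_right <|
      le_div_sqrt_of_mul_le_mul_sqrt (n := m - p + 1) hMy (by linarith) (by linarith)
        (by linarith)
  · exact le_max_of_le_right <| le_max_of_le_left <|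
      le_sq_div_of_mul_le_mul_sqrt_sub (n := q - p + 1) hlam (by linarith) (by linarith)

lemma fusedLasso_neg (m : ℕ) (y : ℕ → ℝ) (a b lam : ℝ) (z : ℕ → ℝ) :
    fusedLasso m (-y) (-a) (-b) lam (-z) = fusedLasso m y a b lam z := by
  have hneg (u v : ℝ) : -u - -v = -(u - v) := by ring
  simp only [fusedLasso, Pi.neg_apply, hneg, neg_sq, abs_neg]

theorem fused_lasso_one_interval_elementwise_bound_general
    (m : ℕ)
    (y : ℕ → ℝ) (a b : ℝ) (lam My : ℝ) (hlam : 0 < lam) (hMy : 0 < My)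
    (hy : ∀ k l : ℕ, 1 ≤ k → k ≤ l → l ≤ m →
      |∑ i ∈ Finset.Icc k l, y i| ≤ My * Real.sqrt (l - k + 1))
    (G : (ℕ → ℝ) → ℝ)
    (hG : ∀ z : ℕ → ℝ, G z =
      ∑ i ∈ Finset.Icc 1 m, (z i - y i) ^ 2
        + lam * (|z 1 - a| + |z m - b| + ∑ i ∈ Finset.Icc 1 (m - 1), |z i - z (i + 1)|))
    (xh : ℕ → ℝ) (hmin : ∀ z : ℕ → ℝ, G xh ≤ G z) :
    ∀ i : ℕ, 1 ≤ i → i ≤ m →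
      |xh i| ≤ max (max (My / Real.sqrt i) (My / Real.sqrt (m + 1 - i)))
        (max (My ^ 2 / (4 * lam)) (2 * lam / m + 2 * My / Real.sqrt m)) := by
  intro i hi him
  obtain rfl : G = fusedLasso m y a b lam := funext hG
  have hy_neg : ∀ k l : ℕ, 1 ≤ k → k ≤ l → l ≤ m →
      |∑ j ∈ Icc k l, (-y) j| ≤ My * √(l - k + 1) := fun k l hk hkl hl => by
    simpa only [Pi.neg_apply, sum_neg_distrib, abs_neg] using hy k l hk hkl hl
  have hmin_neg :
      ∀ z, fusedLasso m (-y) (-a) (-b) lam (-xh) ≤ fusedLasso m (-y) (-a) (-b) lam z :=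
    fun z => by simpa only [← fusedLasso_neg m y a b lam, neg_neg] using hmin (-z)
  have hupper := fusedLasso_minimizer_le hlam hMy.le hy hmin hi him
  have hlower := fusedLasso_minimizer_le hlam hMy.le hy_neg hmin_neg hi him
  rw [Pi.neg_apply] at hlower
  exact abs_le.2 ⟨by linarith, hupper⟩

/-- element-wise bound for the one-interval fused lasso minimizer. -/
theorem fused_lasso_one_interval_elementwise_bound
    (m : ℕ) (hm : 1 ≤ m)
    (y : ℕ → ℝ) (a b : ℝ) (lam My : ℝ) (hlam : 0 < lam) (hMy : 0 < My)
    (hy : ∀ k l : ℕ, 1 ≤ k → k ≤ l → l ≤ m →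
      |∑ i ∈ Finset.Icc k l, y i| ≤ My * Real.sqrt (l - k + 1))
    (G : (ℕ → ℝ) → ℝ)
    (hG : ∀ z : ℕ → ℝ, G z =
      ∑ i ∈ Finset.Icc 1 m, (z i - y i) ^ 2
        + lam * (|z 1 - a| + |z m - b| + ∑ i ∈ Finset.Icc 1 (m - 1), |z i - z (i + 1)|))
    (xh : ℕ → ℝ) (hmin : ∀ z : ℕ → ℝ, G xh ≤ G z) :
    ∀ i : ℕ, 1 ≤ i → i ≤ m →
      |xh i| ≤ max (max (My / Real.sqrt i) (My / Real.sqrt (m + 1 - i)))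
        (max (My ^ 2 / (4 * lam)) (2 * lam / m + 2 * My / Real.sqrt m)) :=
  fused_lasso_one_interval_elementwise_bound_general m y a b lam My hlam hMy hy G hG xh hmin
end

section
/- Let ε_1,...,ε_n be i.i.d. random variables with distribution N(0, σ²), let t > 0, and set M_y = 2σ√(log n + log t). Then with probability at least 1 − 1/t², for all pairs 1 ≤ k ≤ l ≤ n one has |∑_{i=k}^{l} ε_i| ≤ M_y·√(l−k+1). -/
open Finset MeasureTheory ProbabilityTheory Real
open scoped NNReal ENNReal

/-!
A block sum `∑_{i=k}^{l} ε_i` is `N(0, mσ²)` with `m = l - k + 1`. Comparing the centred Gaussian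
density on `[a, ∞)` with the density recentred at `a` gives `P(X ≥ a) ≤ exp(-a²/2v) / 2`, hence the
two-sided bound `P(|X| ≥ a) ≤ exp(-a²/2v)`. For `a = M_y √m` this is `exp(-2(log n + log t)) = 1/(nt)²`,
and a union bound over the at most `n²` pairs `(k, l)` leaves `1/t²`.
-/

lemma MeasureTheory.ofReal_one_sub_le_of_measure_compl_le {α : Type*} [MeasurableSpace α]
    {μ : Measure α} [IsProbabilityMeasure μ] {s : Set α} {x : ℝ} (hx : 0 ≤ x)
    (h : μ sᶜ ≤ ENNReal.ofReal x) : ENNReal.ofReal (1 - x) ≤ μ s :=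
  calc ENNReal.ofReal (1 - x) = 1 - ENNReal.ofReal x := by
        rw [ENNReal.ofReal_sub _ hx, ENNReal.ofReal_one]
    _ ≤ 1 - μ sᶜ := tsub_le_tsub_left h 1
    _ ≤ μ s := tsub_le_iff_right.mpr (measure_univ (μ := μ) ▸ measure_univ_le_add_compl s)

namespace ProbabilityTheory

lemma map_sum_eq_gaussianReal_of_iIndepFun {Ω ι : Type*} [MeasurableSpace Ω] {P : Measure Ω}
    [IsProbabilityMeasure P] {X : ι → Ω → ℝ} (hX : ∀ i, Measurable (X i))
    (hindep : iIndepFun X P) {μ : ι → ℝ} {v : ι → ℝ≥0} (s : Finset ι)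
    (hlaw : ∀ i ∈ s, P.map (X i) = gaussianReal (μ i) (v i)) :
    P.map (∑ i ∈ s, X i) = gaussianReal (∑ i ∈ s, μ i) (∑ i ∈ s, v i) := by
  classical
  induction s using Finset.induction_on with
  | empty => simp [gaussianReal_zero_var, Pi.zero_def, Measure.map_const]
  | insert a s ha ih =>
    rw [sum_insert ha, sum_insert ha, sum_insert ha, add_comm (X a), add_comm (μ a),
      add_comm (v a)]
    exact gaussianReal_add_gaussianReal_of_indepFun (hindep.indepFun_finsetSum_of_notMem hX ha)
      (ih fun i hi => hlaw i (mem_insert_of_mem hi)) (hlaw a (mem_insert_self a s))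

lemma gaussianReal_Ici_self (m : ℝ) {v : ℝ≥0} (hv : v ≠ 0) :
    gaussianReal m v (Set.Ici m) = 2⁻¹ := by
  have hsymm : gaussianReal m v (Set.Iic m) = gaussianReal m v (Set.Ici m) := by
    have h := gaussianReal_map_const_sub (μ := m) (v := v) (2 * m)
    rw [show 2 * m - m = m by ring] at h
    conv_lhs => rw [← h]
    rw [Measure.map_apply (by fun_prop) measurableSet_Iic]
    congr 1
    ext x
    simp only [Set.mem_preimage, Set.mem_Iic, Set.mem_Ici]
    constructor <;> intro <;> linarith
  have hatom : gaussianReal m v {m} = 0 := gaussianReal_absolutelyContinuous m hv (by simp)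
  have htotal : gaussianReal m v (Set.Ici m) + gaussianReal m v (Set.Iio m) = 1 := by
    rw [← Set.compl_Ici, measure_add_measure_compl measurableSet_Ici, measure_univ]
  rw [measure_congr (Iio_ae_eq_Iic' hatom), hsymm] at htotal
  rw [← one_div, ENNReal.eq_div_iff two_ne_zero ENNReal.ofNat_ne_top, two_mul, htotal]

lemma gaussianReal_Ici_le {v : ℝ≥0} (hv : v ≠ 0) {a : ℝ} (ha : 0 ≤ a) :
    gaussianReal 0 v (Set.Ici a) ≤ ENNReal.ofReal (exp (-a ^ 2 / (2 * v))) / 2 := by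
  have hv' : (0 : ℝ) < v := NNReal.coe_pos.mpr (pos_iff_ne_zero.mpr hv)
  -- on `[a, ∞)` we have `x² ≥ a² + (x - a)²`
  have hpdf : ∀ x ∈ Set.Ici a,
      gaussianPDF 0 v x ≤ ENNReal.ofReal (exp (-a ^ 2 / (2 * v))) * gaussianPDF a v x := by
    intro x hx
    rw [gaussianPDF, gaussianPDF, ← ENNReal.ofReal_mul (exp_nonneg _)]
    refine ENNReal.ofReal_le_ofReal ?_
    simp only [gaussianPDFReal, sub_zero]
    rw [mul_left_comm, ← exp_add]
    refine mul_le_mul_of_nonneg_left (exp_le_exp.mpr ?_) (by positivity)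
    rw [← add_div, div_le_div_iff_of_pos_right (by positivity)]
    nlinarith [Set.mem_Ici.mp hx]
  calc gaussianReal 0 v (Set.Ici a) = ∫⁻ x in Set.Ici a, gaussianPDF 0 v x :=
        gaussianReal_apply 0 hv _
    _ ≤ ∫⁻ x in Set.Ici a, ENNReal.ofReal (exp (-a ^ 2 / (2 * v))) * gaussianPDF a v x :=
        setLIntegral_mono ((measurable_gaussianPDF a v).const_mul _) hpdf
    _ = ENNReal.ofReal (exp (-a ^ 2 / (2 * v))) * gaussianReal a v (Set.Ici a) := by
        rw [lintegral_const_mul _ (measurable_gaussianPDF a v), gaussianReal_apply a hv]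
    _ = ENNReal.ofReal (exp (-a ^ 2 / (2 * v))) / 2 := by
        rw [gaussianReal_Ici_self a hv]
        exact (div_eq_mul_inv _ _).symm

lemma gaussianReal_le_abs_le {v : ℝ≥0} (hv : v ≠ 0) {a : ℝ} (ha : 0 ≤ a) :
    gaussianReal 0 v {x | a ≤ |x|} ≤ ENNReal.ofReal (exp (-a ^ 2 / (2 * v))) := by
  have hsplit : {x : ℝ | a ≤ |x|} = Set.Ici a ∪ (fun x => -x) ⁻¹' Set.Ici a := by
    ext x
    simp [le_abs', or_comm]
  have hneg : gaussianReal 0 v ((fun x => -x) ⁻¹' Set.Ici a) = gaussianReal 0 v (Set.Ici a) := by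
    rw [← Measure.map_apply measurable_neg measurableSet_Ici, gaussianReal_map_neg, neg_zero]
  calc gaussianReal 0 v {x | a ≤ |x|}
      ≤ gaussianReal 0 v (Set.Ici a) + gaussianReal 0 v (Set.Ici a) := by
        rw [hsplit]
        exact (measure_union_le _ _).trans_eq (by rw [hneg])
    _ ≤ ENNReal.ofReal (exp (-a ^ 2 / (2 * v))) := by
        rw [← ENNReal.add_halves (ENNReal.ofReal _)]
        exact add_le_add (gaussianReal_Ici_le hv ha) (gaussianReal_Ici_le hv ha)

lemma measure_lt_abs_le_of_map_eq_gaussianReal {Ω : Type*} [MeasurableSpace Ω] {P : Measure Ω}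
    {X : Ω → ℝ} (hX : Measurable X) {v : ℝ≥0} (hv : v ≠ 0) (hlaw : P.map X = gaussianReal 0 v)
    {c : ℝ} (hc : 0 ≤ c) :
    P {ω | c * √v < |X ω|} ≤ ENNReal.ofReal (exp (-c ^ 2 / 2)) := by
  have hv' : (0 : ℝ) < v := NNReal.coe_pos.mpr (pos_iff_ne_zero.mpr hv)
  calc P {ω | c * √v < |X ω|} ≤ P (X ⁻¹' {x | c * √v ≤ |x|}) :=
        measure_mono fun ω (hω : c * √v < |X ω|) => hω.le
    _ = gaussianReal 0 v {x | c * √v ≤ |x|} := by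
        rw [← hlaw, Measure.map_apply hX (measurableSet_le measurable_const measurable_abs)]
    _ ≤ ENNReal.ofReal (exp (-(c * √v) ^ 2 / (2 * v))) := gaussianReal_le_abs_le hv (by positivity)
    _ = ENNReal.ofReal (exp (-c ^ 2 / 2)) := by
        rw [mul_pow, sq_sqrt hv'.le]
        congr 2
        field_simp

end ProbabilityTheory

section PartialSums

variable {Ω : Type*} [MeasurableSpace Ω] {P : Measure Ω} [IsProbabilityMeasure P] {n : ℕ}
  {ε : ℕ → Ω → ℝ}

lemma map_sum_Icc_eq_gaussianReal (hmeas : ∀ i, Measurable (ε i))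
    (hindep : iIndepFun (fun i : (Icc 1 n : Finset ℕ) => ε i) P) {v : ℝ≥0}
    (hlaw : ∀ i, 1 ≤ i → i ≤ n → P.map (ε i) = gaussianReal 0 v) {k l : ℕ}
    (hk : 1 ≤ k) (hln : l ≤ n) :
    P.map (fun ω => ∑ i ∈ Icc k l, ε i ω) = gaussianReal 0 ((l + 1 - k : ℕ) * v) := by
  have hsub : ∀ i ∈ Icc k l, i ∈ Icc 1 n := fun i hi => by
    simp only [mem_Icc] at hi ⊢
    omega
  have h := map_sum_eq_gaussianReal_of_iIndepFun
    (X := fun i : (Icc 1 n : Finset ℕ) => ε i) (fun i => hmeas i) hindep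
    ((Icc k l).subtype (· ∈ Icc 1 n)) (μ := 0) (v := fun _ => v)
    fun i _ => hlaw i (mem_Icc.mp i.2).1 (mem_Icc.mp i.2).2
  simp only [Pi.zero_apply, sum_const_zero, sum_const, card_subtype, filter_true_of_mem hsub,
    Nat.card_Icc, nsmul_eq_mul] at h
  rw [← h]
  congr 1
  funext ω
  rw [Finset.sum_apply, sum_subtype_of_mem (fun i => ε i ω) hsub]

lemma measure_lt_abs_sum_Icc_le (hmeas : ∀ i, Measurable (ε i))
    (hindep : iIndepFun (fun i : (Icc 1 n : Finset ℕ) => ε i) P) {σ : ℝ≥0} (hσ : σ ≠ 0)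
    (hlaw : ∀ i, 1 ≤ i → i ≤ n → P.map (ε i) = gaussianReal 0 (σ ^ 2)) {k l : ℕ}
    (hk : 1 ≤ k) (hkl : k ≤ l) (hln : l ≤ n) {c : ℝ} (hc : 0 ≤ c) :
    P {ω | c * σ * √(l - k + 1) < |∑ i ∈ Icc k l, ε i ω|} ≤
      ENNReal.ofReal (exp (-c ^ 2 / 2)) := by
  have hv : ((l + 1 - k : ℕ) * σ ^ 2 : ℝ≥0) ≠ 0 :=
    mul_ne_zero (by simp only [ne_eq, Nat.cast_eq_zero]; omega) (pow_ne_zero 2 hσ)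
  have hsd : √(((l + 1 - k : ℕ) * σ ^ 2 : ℝ≥0) : ℝ) = σ * √(l - k + 1) := by
    rw [NNReal.coe_mul, NNReal.coe_pow, NNReal.coe_natCast, Nat.cast_sub (by omega),
      Nat.cast_add_one, sqrt_mul' _ (sq_nonneg _), sqrt_sq σ.coe_nonneg, mul_comm,
      sub_add_eq_add_sub]
  have h := measure_lt_abs_le_of_map_eq_gaussianReal (by fun_prop) hv
    (map_sum_Icc_eq_gaussianReal hmeas hindep hlaw hk hln) hc
  rwa [hsd, ← mul_assoc] at h

lemma measure_exists_lt_abs_sum_Icc_le (hmeas : ∀ i, Measurable (ε i))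
    (hindep : iIndepFun (fun i : (Icc 1 n : Finset ℕ) => ε i) P) {σ : ℝ≥0} (hσ : σ ≠ 0)
    (hlaw : ∀ i, 1 ≤ i → i ≤ n → P.map (ε i) = gaussianReal 0 (σ ^ 2)) {c : ℝ} (hc : 0 ≤ c) :
    P {ω | ∃ k l : ℕ, 1 ≤ k ∧ k ≤ l ∧ l ≤ n ∧ c * σ * √(l - k + 1) < |∑ i ∈ Icc k l, ε i ω|} ≤
      n ^ 2 * ENNReal.ofReal (exp (-c ^ 2 / 2)) := by
  set pairs := (Icc 1 n ×ˢ Icc 1 n).filter fun p : ℕ × ℕ => p.1 ≤ p.2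
  have hcover : {ω | ∃ k l : ℕ, 1 ≤ k ∧ k ≤ l ∧ l ≤ n ∧
      c * σ * √(l - k + 1) < |∑ i ∈ Icc k l, ε i ω|} ⊆
      ⋃ p ∈ pairs, {ω | c * σ * √(p.2 - p.1 + 1) < |∑ i ∈ Icc p.1 p.2, ε i ω|} := by
    rintro ω ⟨k, l, hk, hkl, hln, h⟩
    simp only [Set.mem_iUnion, pairs, mem_filter, mem_product, mem_Icc]
    exact ⟨(k, l), ⟨⟨⟨hk, hkl.trans hln⟩, hk.trans hkl, hln⟩, hkl⟩, h⟩
  have hcard : pairs.card ≤ n ^ 2 :=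
    (card_filter_le _ _).trans (by rw [card_product, Nat.card_Icc, sq]; simp)
  calc _ ≤ _ := measure_mono hcover
    _ ≤ ∑ p ∈ pairs, P {ω | c * σ * √(p.2 - p.1 + 1) < |∑ i ∈ Icc p.1 p.2, ε i ω|} :=
        measure_biUnion_finset_le _ _
    _ ≤ pairs.card • ENNReal.ofReal (exp (-c ^ 2 / 2)) := by
        refine sum_le_card_nsmul _ _ _ fun p hp => ?_
        simp only [pairs, mem_filter, mem_product, mem_Icc] at hp
        exact measure_lt_abs_sum_Icc_le hmeas hindep hσ hlaw hp.1.1.1 hp.2 hp.1.2.2 hc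
    _ ≤ n ^ 2 * ENNReal.ofReal (exp (-c ^ 2 / 2)) := by
        rw [nsmul_eq_mul]
        gcongr
        exact_mod_cast hcard

end PartialSums

/-- with probability at least `1 - 1/t^2`, all partial sums of `n` i.i.d.
`N(0, σ²)` random variables `ε_1, ..., ε_n` are bounded by `M_y √(l-k+1)` where
`M_y = 2σ√(log n + log t)`. -/
theorem gaussian_partial_sums_bound
    {Ω : Type*} [MeasurableSpace Ω] (P : Measure Ω) [IsProbabilityMeasure P]
    (n : ℕ) (hn : 1 ≤ n) (σ : ℝ≥0) (hσ : 0 < σ) (t : ℝ) (ht : 0 < t)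
    (ε : ℕ → Ω → ℝ) (hmeas : ∀ i, Measurable (ε i))
    (hindep : iIndepFun
      (fun i : (Finset.Icc 1 n : Finset ℕ) => ε i) P)
    (hlaw : ∀ i : ℕ, 1 ≤ i → i ≤ n → Measure.map (ε i) P = gaussianReal 0 (σ ^ 2))
    (My : ℝ) (hMy : My = 2 * σ * Real.sqrt (Real.log n + Real.log t)) :
    ENNReal.ofReal (1 - 1 / t ^ 2) ≤
      P {ω | ∀ k l : ℕ, 1 ≤ k → k ≤ l → l ≤ n →
        |∑ i ∈ Finset.Icc k l, ε i ω| ≤ My * Real.sqrt (l - k + 1)} := by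
  rcases le_or_gt t 1 with ht1 | ht1
  · rw [ENNReal.ofReal_of_nonpos (by rw [sub_nonpos, le_div_iff₀ (by positivity)]; nlinarith)]
    exact zero_le
  have hL : 0 ≤ log n + log t := add_nonneg (log_natCast_nonneg n) (log_pos ht1).le
  have hbound : (n : ℝ≥0∞) ^ 2 * ENNReal.ofReal (exp (-(2 * √(log n + log t)) ^ 2 / 2)) =
      ENNReal.ofReal (1 / t ^ 2) := by
    rw [← ENNReal.ofReal_natCast, ← ENNReal.ofReal_pow n.cast_nonneg,
      ← ENNReal.ofReal_mul (by positivity), mul_pow, sq_sqrt hL]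
    congr 1
    rw [show -(2 ^ 2 * (log n + log t)) / 2 = -(log (n ^ 2) + log (t ^ 2)) by
      rw [log_pow, log_pow]; push_cast; ring, exp_neg, exp_add, exp_log (by positivity),
      exp_log (by positivity)]
    field_simp
  have hbad := measure_exists_lt_abs_sum_Icc_le hmeas hindep hσ.ne' hlaw
    (c := 2 * √(log n + log t)) (by positivity)
  rw [hbound, show 2 * √(log n + log t) * σ = My by rw [hMy]; ring] at hbad
  refine ofReal_one_sub_le_of_measure_compl_le (by positivity) ((measure_mono ?_).trans hbad)
  intro ω hω
  simpa using hω
end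

section
/- If a, b, M_y, λ > 0 and y_1,...,y_m satisfy |∑_{i=k}^{l} y_i| ≤ M_y·√(l−k+1) for all 1 ≤ k ≤ l ≤ m, and if for each index i in an interval of length m_k the element-wise bound |x̂_i − x_i| ≤ max(M_y/√(d_i), M_y²/(4λ), 2λ/m_k + 2M_y/√(m_k)) holds with d_i the distance of i to the nearest change point, then summing over the k-th interval yields the deterministic bound ∑_{i=n_k}^{n_{k+1}−1} |x̂_i − x_i|² ≤ m_k·(M_y²/(4λ))² + 8λ²/m_k + 8M_y² + 2M_y²(log m_k + 1). -/
/-!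
The square of a maximum of three terms is at most the sum of their squares. The first term
contributes `M_y² / d_i`, and since `1 / min p q ≤ 1 / p + 1 / q`, the reciprocal distances summed
over an interval of length `m` are at most twice the harmonic number `H_m ≤ log m + 1`. The third
term is handled by `(a + b)² ≤ 2a² + 2b²`.
-/

open Finset Real

theorem sum_range_inv_min_le_two_mul_log_add_one (m : ℕ) :
    ∑ j ∈ range m, (min ((j : ℝ) + 1) ((m : ℝ) - j))⁻¹ ≤ 2 * (log m + 1) := by
  have hharmonic : ∑ j ∈ range m, ((j : ℝ) + 1)⁻¹ = harmonic m := by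
    simp [harmonic]
  have hreflect : ∑ j ∈ range m, ((m : ℝ) - j)⁻¹ = harmonic m := by
    rw [← hharmonic, ← sum_range_reflect]
    refine sum_congr rfl fun j hj => ?_
    have hjm : j < m := mem_range.mp hj
    rw [Nat.cast_sub (by omega), Nat.cast_sub (by omega)]
    ring_nf
  have hterm : ∀ j ∈ range m,
      (min ((j : ℝ) + 1) ((m : ℝ) - j))⁻¹ ≤ ((j : ℝ) + 1)⁻¹ + ((m : ℝ) - j)⁻¹ := by
    intro j hj
    have hj' : (j : ℝ) + 1 ≤ m := by exact_mod_cast mem_range.mp hj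
    rcases min_cases ((j : ℝ) + 1) ((m : ℝ) - j) with ⟨h, -⟩ | ⟨h, -⟩ <;> rw [h]
    · exact le_add_of_nonneg_right (inv_nonneg.mpr (by linarith))
    · exact le_add_of_nonneg_left (by positivity)
  calc ∑ j ∈ range m, (min ((j : ℝ) + 1) ((m : ℝ) - j))⁻¹
      ≤ ∑ j ∈ range m, (((j : ℝ) + 1)⁻¹ + ((m : ℝ) - j)⁻¹) := sum_le_sum hterm
    _ = 2 * (harmonic m : ℝ) := by rw [sum_add_distrib, hharmonic, hreflect]; ring
    _ ≤ 2 * (log m + 1) := by linarith [harmonic_le_one_add_log m]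

theorem sq_le_sq_add_sq_add_sq_of_abs_le_max {R : Type*} [CommRing R] [LinearOrder R]
    [IsStrictOrderedRing R] {e a b c : R} (h : |e| ≤ max a (max b c)) :
    e ^ 2 ≤ a ^ 2 + b ^ 2 + c ^ 2 := by
  have hsq : e ^ 2 ≤ max a (max b c) ^ 2 := by
    rw [← sq_abs e]
    exact pow_le_pow_left₀ (abs_nonneg e) h 2
  refine hsq.trans ?_
  rcases max_choice a (max b c) with hmax | hmax <;> rw [hmax]
  · nlinarith [sq_nonneg b, sq_nonneg c]
  · rcases max_choice b c with hmax' | hmax' <;> rw [hmax'] <;>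
      nlinarith [sq_nonneg a, sq_nonneg b, sq_nonneg c]

theorem mul_sq_two_mul_div_add_two_mul_div_sqrt_le {t : ℝ} (ht : 0 < t) (u v : ℝ) :
    t * (2 * u / t + 2 * v / √t) ^ 2 ≤ 8 * u ^ 2 / t + 8 * v ^ 2 := by
  have hsqrt : √t ^ 2 = t := sq_sqrt ht.le
  calc t * (2 * u / t + 2 * v / √t) ^ 2
      ≤ t * (2 * ((2 * u / t) ^ 2 + (2 * v / √t) ^ 2)) :=
        mul_le_mul_of_nonneg_left add_sq_le ht.le
    _ = 8 * u ^ 2 / t + 8 * v ^ 2 := by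
        rw [div_pow (2 * v), hsqrt]
        field_simp
        ring

theorem sum_range_sq_le_of_abs_le_max (M B C : ℝ) (m : ℕ) (e : ℕ → ℝ)
    (he : ∀ j < m, |e j| ≤ max (M / √(min ((j : ℝ) + 1) ((m : ℝ) - j))) (max B C)) :
    ∑ j ∈ range m, e j ^ 2 ≤ 2 * M ^ 2 * (log m + 1) + m * B ^ 2 + m * C ^ 2 := by
  have hterm : ∀ j ∈ range m,
      e j ^ 2 ≤ M ^ 2 * (min ((j : ℝ) + 1) ((m : ℝ) - j))⁻¹ + B ^ 2 + C ^ 2 := by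
    intro j hj
    have hjm : j < m := mem_range.mp hj
    have hj' : (j : ℝ) + 1 ≤ m := by exact_mod_cast hjm
    have hd : 0 ≤ min ((j : ℝ) + 1) ((m : ℝ) - j) := le_min (by positivity) (by linarith)
    have h := sq_le_sq_add_sq_add_sq_of_abs_le_max (he j hjm)
    rwa [div_pow, sq_sqrt hd, div_eq_mul_inv] at h
  calc ∑ j ∈ range m, e j ^ 2
      ≤ ∑ j ∈ range m, (M ^ 2 * (min ((j : ℝ) + 1) ((m : ℝ) - j))⁻¹ + B ^ 2 + C ^ 2) :=
        sum_le_sum hterm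
    _ = M ^ 2 * ∑ j ∈ range m, (min ((j : ℝ) + 1) ((m : ℝ) - j))⁻¹ + m * B ^ 2 + m * C ^ 2 := by
        simp only [sum_add_distrib, mul_sum, sum_const, card_range, nsmul_eq_mul]
    _ ≤ M ^ 2 * (2 * (log m + 1)) + m * B ^ 2 + m * C ^ 2 := by
        gcongr
        exact sum_range_inv_min_le_two_mul_log_add_one m
    _ = 2 * M ^ 2 * (log m + 1) + m * B ^ 2 + m * C ^ 2 := by ring

theorem fused_lasso_interval_squared_error_bound_general
    (lam My : ℝ)
    (mk : ℕ) (hmk : 1 ≤ mk)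
    (nk nk1 : ℕ) (hnk1 : nk1 = nk + mk)
    (x xh : ℕ → ℝ)
    (hbound : ∀ i : ℕ, nk ≤ i → i ≤ nk1 - 1 →
      |xh i - x i| ≤ max (My / Real.sqrt (min (i + 1 - nk) (nk1 - i)))
        (max (My ^ 2 / (4 * lam)) (2 * lam / mk + 2 * My / Real.sqrt mk))) :
    ∑ i ∈ Finset.Icc nk (nk1 - 1), |xh i - x i| ^ 2 ≤
      mk * (My ^ 2 / (4 * lam)) ^ 2 + 8 * lam ^ 2 / mk + 8 * My ^ 2
        + 2 * My ^ 2 * (Real.log mk + 1) := by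
  have hIcc : Icc nk (nk1 - 1) = Ico nk (nk + mk) := by
    rw [← Ico_add_one_right_eq_Icc]
    congr 1
    omega
  have he : ∀ j < mk, |xh (nk + j) - x (nk + j)| ≤
      max (My / √(min ((j : ℝ) + 1) ((mk : ℝ) - j)))
        (max (My ^ 2 / (4 * lam)) (2 * lam / mk + 2 * My / √mk)) := by
    intro j hj
    convert hbound (nk + j) (by omega) (by omega) using 5 <;> push_cast [hnk1] <;> ring
  rw [hIcc, sum_Ico_eq_sum_range, Nat.add_sub_cancel_left]
  have hmk_pos : (0 : ℝ) < mk := by exact_mod_cast hmk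
  calc ∑ j ∈ range mk, |xh (nk + j) - x (nk + j)| ^ 2
      ≤ 2 * My ^ 2 * (log mk + 1) + mk * (My ^ 2 / (4 * lam)) ^ 2
          + mk * (2 * lam / mk + 2 * My / √mk) ^ 2 := by
        simpa only [sq_abs] using sum_range_sq_le_of_abs_le_max _ _ _ mk _ he
    _ ≤ _ := by linarith [mul_sq_two_mul_div_add_two_mul_div_sqrt_le hmk_pos lam My]

/-- summing the element-wise fused lasso bound over the `k`-th constant interval
yields the deterministic squared-error bound for that interval. -/
theorem fused_lasso_interval_squared_error_bound
    (a b lam My : ℝ) (ha : 0 < a) (hb : 0 < b) (hlam : 0 < lam) (hMy : 0 < My)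
    (mk : ℕ) (hmk : 1 ≤ mk)
    (y : ℕ → ℝ)
    (hy : ∀ k l : ℕ, 1 ≤ k → k ≤ l → l ≤ mk →
      |∑ i ∈ Finset.Icc k l, y i| ≤ My * Real.sqrt (l - k + 1))
    (nk nk1 : ℕ) (hnk : 1 ≤ nk) (hnk1 : nk1 = nk + mk)
    (x xh : ℕ → ℝ)
    (hbound : ∀ i : ℕ, nk ≤ i → i ≤ nk1 - 1 →
      |xh i - x i| ≤ max (My / Real.sqrt (min (i + 1 - nk) (nk1 - i)))
        (max (My ^ 2 / (4 * lam)) (2 * lam / mk + 2 * My / Real.sqrt mk))) :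
    ∑ i ∈ Finset.Icc nk (nk1 - 1), |xh i - x i| ^ 2 ≤
      mk * (My ^ 2 / (4 * lam)) ^ 2 + 8 * lam ^ 2 / mk + 8 * My ^ 2
        + 2 * My ^ 2 * (Real.log mk + 1) :=
  fused_lasso_interval_squared_error_bound_general lam My mk hmk nk nk1 hnk1 x xh hbound
end

section
/- Let y_1,...,y_m ∈ ℝ, a, b ∈ ℝ, λ > 0, M_y > 0 with |∑_{i=k}^{l} y_i| ≤ M_y·√(l−k+1) for all 1 ≤ k ≤ l ≤ m, and let x̂ minimize G(x_1,...,x_m) = ∑_{i=1}^m (x_i − y_i)² + λ(|x_1 − a| + |x_m − b| + ∑_{i=1}^{m−1} |x_i − x_{i+1}|). Write x̂_0 = a and x̂_{m+1} = b. Then there are no indices 1 ≤ m_1 ≤ m_2 ≤ m with x̂_{m_1} = x̂_{m_1+1} = ... = x̂_{m_2} > M_y²/(4λ), x̂_{m_2} > x̂_{m_2+1}, and x̂_{m_1} > x̂_{m_1−1}; and symmetrically there are no 1 ≤ m_1 ≤ m_2 ≤ m with x̂_{m_1} = ... = x̂_{m_2} < −M_y²/(4λ), x̂_{m_2} < x̂_{m_2+1},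 and x̂_{m_1} < x̂_{m_1−1}. -/
/-!
Suppose the block `x̂_{m₁} = ⋯ = x̂_{m₂} = c` of `n` entries lies strictly above both of its
neighbours. Lowering the block by a small `ε > 0` keeps the boundary values, lowers the penalty
by exactly `2 λ ε` and raises the fit by `ε (n ε + 2 ∑ (y_i - c))`, so minimality forces
`λ ≤ ∑_{block} (y_i - c)`. Hence `n c ≤ ∑ y_i - λ ≤ M_y √n - λ ≤ n M_y² / (4 λ)` by AM-GM.
The case of a block below both neighbours follows by negating `x̂`, `y`, `a` and `b`.
-/

open Finset Filter Topology

namespace FusedLasso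

/-- The fused lasso objective, with the boundary values `a`, `b` stored as `x 0` and `x (m + 1)`. -/
noncomputable def objective (m : ℕ) (y : ℕ → ℝ) (lam : ℝ) (x : ℕ → ℝ) : ℝ :=
  ∑ i ∈ Icc 1 m, (x i - y i) ^ 2 + lam * ∑ i ∈ Icc 0 m, |x i - x (i + 1)|

def IsSolution (m : ℕ) (y : ℕ → ℝ) (lam : ℝ) (x : ℕ → ℝ) : Prop :=
  ∀ z : ℕ → ℝ, z 0 = x 0 → z (m + 1) = x (m + 1) → objective m y lam x ≤ objective m y lam z

noncomputable def lowerBlock (x : ℕ → ℝ) (m₁ m₂ : ℕ) (ε : ℝ) (i : ℕ) : ℝ :=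
  if i ∈ Icc m₁ m₂ then x i - ε else x i

lemma sum_Icc_zero_split {M : Type*} [AddCommMonoid M] {m : ℕ} (hm : 1 ≤ m) (f : ℕ → M) :
    ∑ i ∈ Icc 0 m, f i = f 0 + f m + ∑ i ∈ Icc 1 (m - 1), f i := by
  have h0 : Icc 0 m = insert 0 (Icc 1 m) := by ext j; simp only [mem_Icc, mem_insert]; omega
  have hm' : Icc 1 m = insert m (Icc 1 (m - 1)) := by ext j; simp only [mem_Icc, mem_insert]; omega
  rw [h0, sum_insert (by simp), hm', sum_insert (by simp only [mem_Icc]; omega), add_assoc]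

lemma sum_sq_add_mul_penalty_eq_objective {m : ℕ} (hm : 1 ≤ m) (y : ℕ → ℝ) (lam : ℝ)
    {a b : ℝ} {z : ℕ → ℝ}
    (h0 : z 0 = a) (h1 : z (m + 1) = b) :
    ∑ i ∈ Icc 1 m, (z i - y i) ^ 2
        + lam * (|z 1 - a| + |z m - b| + ∑ i ∈ Icc 1 (m - 1), |z i - z (i + 1)|) =
      objective m y lam z := by
  rw [objective, sum_Icc_zero_split hm, h0, h1, abs_sub_comm a]

lemma objective_neg (m : ℕ) (y : ℕ → ℝ) (lam : ℝ) (x : ℕ → ℝ) :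
    objective m (-y) lam (-x) = objective m y lam x := by
  have hsq (i : ℕ) : ((-x) i - (-y) i) ^ 2 = (x i - y i) ^ 2 := by simp only [Pi.neg_apply]; ring
  have habs (i : ℕ) : |(-x) i - (-x) (i + 1)| = |x i - x (i + 1)| := by
    simp only [Pi.neg_apply, neg_sub_neg, abs_sub_comm]
  simp only [objective, hsq, habs]

lemma IsSolution.neg {m : ℕ} {y : ℕ → ℝ} {lam : ℝ} {x : ℕ → ℝ} (hx : IsSolution m y lam x) :
    IsSolution m (-y) lam (-x) := fun z h0 h1 => by
  rw [objective_neg, ← neg_neg z, objective_neg]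
  exact hx (-z) (by simp [h0]) (by simp [h1])

section lowerBlock

variable {x : ℕ → ℝ} {m₁ m₂ : ℕ} {ε : ℝ}

lemma abs_sub_lowerBlock (h1 : 1 ≤ m₁) (h12 : m₁ ≤ m₂) (hε : 0 ≤ ε) (hleft : ε ≤ x m₁ - x (m₁ - 1))
    (hright : ε ≤ x m₂ - x (m₂ + 1)) (i : ℕ) :
    |lowerBlock x m₁ m₂ ε i - lowerBlock x m₁ m₂ ε (i + 1)| =
      |x i - x (i + 1)| - (if i = m₁ - 1 then ε else 0) - (if i = m₂ then ε else 0) := by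
  simp only [lowerBlock, mem_Icc]
  rcases lt_trichotomy (i + 1) m₁ with h | rfl | h
  · rw [if_neg (by omega), if_neg (by omega), if_neg (by omega), if_neg (by omega)]
    ring
  · rw [if_neg (by omega), if_pos (by omega), if_pos (by omega), if_neg (by omega)]
    rw [Nat.add_sub_cancel] at hleft
    rw [abs_of_nonpos (by linarith), abs_of_nonpos (by linarith)]
    ring
  rcases lt_trichotomy i m₂ with h' | rfl | h'
  · rw [if_pos (by omega), if_pos (by omega), if_neg (by omega), if_neg (by omega)]
    ring_nf
  · rw [if_pos (by omega), if_neg (by omega), if_neg (by omega), if_pos rfl]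
    rw [abs_of_nonneg (by linarith), abs_of_nonneg (by linarith)]
    ring
  · rw [if_neg (by omega), if_neg (by omega), if_neg (by omega), if_neg (by omega)]
    ring

lemma sum_abs_sub_lowerBlock {m : ℕ} (h1 : 1 ≤ m₁) (h12 : m₁ ≤ m₂) (h2 : m₂ ≤ m) (hε : 0 ≤ ε)
    (hleft : ε ≤ x m₁ - x (m₁ - 1)) (hright : ε ≤ x m₂ - x (m₂ + 1)) :
    ∑ i ∈ Icc 0 m, |lowerBlock x m₁ m₂ ε i - lowerBlock x m₁ m₂ ε (i + 1)| =
      ∑ i ∈ Icc 0 m, |x i - x (i + 1)| - 2 * ε := by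
  rw [sum_congr rfl fun i _ => abs_sub_lowerBlock h1 h12 hε hleft hright i, sum_sub_distrib,
    sum_sub_distrib, sum_ite_eq', sum_ite_eq', if_pos (by simp only [mem_Icc]; omega),
    if_pos (by simp only [mem_Icc]; omega)]
  ring

lemma sum_sq_lowerBlock {m : ℕ} (y : ℕ → ℝ) (h1 : 1 ≤ m₁) (h2 : m₂ ≤ m) :
    ∑ i ∈ Icc 1 m, (lowerBlock x m₁ m₂ ε i - y i) ^ 2 =
      ∑ i ∈ Icc 1 m, (x i - y i) ^ 2 + ε * ∑ i ∈ Icc m₁ m₂, (ε - 2 * (x i - y i)) := by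
  have hsq (i : ℕ) : (lowerBlock x m₁ m₂ ε i - y i) ^ 2 =
      (x i - y i) ^ 2 + if i ∈ Icc m₁ m₂ then ε * (ε - 2 * (x i - y i)) else 0 := by
    unfold lowerBlock; split_ifs <;> ring
  rw [sum_congr rfl fun i _ => hsq i, sum_add_distrib, sum_ite_mem,
    inter_eq_right.mpr (Icc_subset_Icc h1 h2), mul_sum]

lemma objective_lowerBlock {m : ℕ} (y : ℕ → ℝ) (lam : ℝ) (h1 : 1 ≤ m₁) (h12 : m₁ ≤ m₂)
    (h2 : m₂ ≤ m) (hε : 0 ≤ ε) (hleft : ε ≤ x m₁ - x (m₁ - 1))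
    (hright : ε ≤ x m₂ - x (m₂ + 1)) :
    objective m y lam (lowerBlock x m₁ m₂ ε) =
      objective m y lam x + ε * (∑ i ∈ Icc m₁ m₂, (ε - 2 * (x i - y i)) - 2 * lam) := by
  rw [objective, objective, sum_sq_lowerBlock y h1 h2,
    sum_abs_sub_lowerBlock h1 h12 h2 hε hleft hright]
  ring

end lowerBlock

lemma le_add_sq_div_four_mul {lam : ℝ} (hlam : 0 < lam) (v : ℝ) :
    v ≤ lam + v ^ 2 / (4 * lam) := by
  have h : lam + v ^ 2 / (4 * lam) - v = (v - 2 * lam) ^ 2 / (4 * lam) := by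
    field_simp
    ring
  linarith [h ▸ (by positivity : 0 ≤ (v - 2 * lam) ^ 2 / (4 * lam))]

lemma IsSolution.lam_le_sum_sub {m : ℕ} {y : ℕ → ℝ} {lam : ℝ} {x : ℕ → ℝ}
    (hx : IsSolution m y lam x) {m₁ m₂ : ℕ} (h1 : 1 ≤ m₁) (h12 : m₁ ≤ m₂) (h2 : m₂ ≤ m)
    (hleft : x (m₁ - 1) < x m₁) (hright : x (m₂ + 1) < x m₂) :
    lam ≤ ∑ i ∈ Icc m₁ m₂, (y i - x i) := by
  set gap := min (x m₁ - x (m₁ - 1)) (x m₂ - x (m₂ + 1))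
  have hgap : 0 < gap := lt_min (by linarith) (by linarith)
  have hsmall : ∀ ε ∈ Set.Ioo 0 gap, 2 * lam ≤ ∑ i ∈ Icc m₁ m₂, (ε - 2 * (x i - y i)) := by
    rintro ε ⟨hε, hεgap⟩
    have hle := hx (lowerBlock x m₁ m₂ ε) (if_neg (by simp only [mem_Icc]; omega))
      (if_neg (by simp only [mem_Icc]; omega))
    rw [objective_lowerBlock y lam h1 h12 h2 hε.le (hεgap.le.trans (min_le_left _ _))
      (hεgap.le.trans (min_le_right _ _))] at hle
    have hgain := (le_add_iff_nonneg_right _).mp hle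
    linarith [(mul_nonneg_iff_of_pos_left hε).mp hgain]
  have hlim : Tendsto (fun ε : ℝ => ∑ i ∈ Icc m₁ m₂, (ε - 2 * (x i - y i))) (𝓝[>] 0)
      (𝓝 (∑ i ∈ Icc m₁ m₂, (0 - 2 * (x i - y i)))) :=
    ((by fun_prop : Continuous fun ε : ℝ => ∑ i ∈ Icc m₁ m₂, (ε - 2 * (x i - y i))).tendsto
      0).mono_left nhdsWithin_le_nhds
  have hlam := ge_of_tendsto hlim (eventually_of_mem (Ioo_mem_nhdsGT hgap) hsmall)
  have hsum : ∑ i ∈ Icc m₁ m₂, (0 - 2 * (x i - y i)) = 2 * ∑ i ∈ Icc m₁ m₂, (y i - x i) := by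
    rw [mul_sum]
    exact sum_congr rfl fun i _ => by ring
  linarith

lemma le_sq_div_of_le_sum_sub {ι : Type*} {s : Finset ι} (hs : s.Nonempty) {y : ι → ℝ}
    {lam c My : ℝ} (hlam : 0 < lam) (hc : lam ≤ ∑ i ∈ s, (y i - c))
    (hS : ∑ i ∈ s, y i ≤ My * Real.sqrt #s) :
    c ≤ My ^ 2 / (4 * lam) := by
  have hn : (0 : ℝ) < #s := by exact_mod_cast hs.card_pos
  rw [sum_sub_distrib, sum_const, nsmul_eq_mul] at hc
  have hsq : (My * Real.sqrt #s) ^ 2 / (4 * lam) = #s * (My ^ 2 / (4 * lam)) := by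
    rw [mul_pow, Real.sq_sqrt hn.le]
    ring
  have hamgm := le_add_sq_div_four_mul hlam (My * Real.sqrt #s)
  rw [hsq] at hamgm
  exact le_of_mul_le_mul_left (by linarith) hn

lemma IsSolution.le_of_plateau {m : ℕ} {y : ℕ → ℝ} {lam My : ℝ} {x : ℕ → ℝ}
    (hx : IsSolution m y lam x) (hlam : 0 < lam) {m₁ m₂ : ℕ} (h1 : 1 ≤ m₁) (h12 : m₁ ≤ m₂)
    (h2 : m₂ ≤ m) (hplat : ∀ j, m₁ ≤ j → j ≤ m₂ → x j = x m₁)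
    (hleft : x (m₁ - 1) < x m₁) (hright : x (m₂ + 1) < x m₂)
    (hS : ∑ i ∈ Icc m₁ m₂, y i ≤ My * Real.sqrt ((m₂ : ℝ) - m₁ + 1)) :
    x m₁ ≤ My ^ 2 / (4 * lam) := by
  have hsum : ∑ i ∈ Icc m₁ m₂, (y i - x i) = ∑ i ∈ Icc m₁ m₂, (y i - x m₁) :=
    sum_congr rfl fun i hi => by rw [hplat i (mem_Icc.mp hi).1 (mem_Icc.mp hi).2]
  have hcard : ((#(Icc m₁ m₂) : ℕ) : ℝ) = (m₂ : ℝ) - m₁ + 1 := by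
    rw [Nat.card_Icc, Nat.cast_sub (by omega)]
    push_cast
    ring
  rw [← hcard] at hS
  exact le_sq_div_of_le_sum_sub (nonempty_Icc.mpr h12) hlam
    (hsum ▸ hx.lam_le_sum_sub h1 h12 h2 hleft hright) hS

end FusedLasso

theorem fused_lasso_one_interval_no_local_extremum_general
    (m : ℕ)
    (y : ℕ → ℝ) (a b : ℝ) (lam My : ℝ) (hlam : 0 < lam)
    (hy : ∀ k l : ℕ, 1 ≤ k → k ≤ l → l ≤ m →
      |∑ i ∈ Finset.Icc k l, y i| ≤ My * Real.sqrt (l - k + 1))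
    (G : (ℕ → ℝ) → ℝ)
    (hG : ∀ z : ℕ → ℝ, G z =
      ∑ i ∈ Finset.Icc 1 m, (z i - y i) ^ 2
        + lam * (|z 1 - a| + |z m - b| + ∑ i ∈ Finset.Icc 1 (m - 1), |z i - z (i + 1)|))
    (xh : ℕ → ℝ) (hmin : ∀ z : ℕ → ℝ, G xh ≤ G z)
    (ha : xh 0 = a) (hb : xh (m + 1) = b) :
    (¬ ∃ m₁ m₂ : ℕ, 1 ≤ m₁ ∧ m₁ ≤ m₂ ∧ m₂ ≤ m ∧
        (∀ j : ℕ, m₁ ≤ j → j ≤ m₂ → xh j = xh m₁) ∧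
        My ^ 2 / (4 * lam) < xh m₁ ∧
        xh (m₂ + 1) < xh m₂ ∧ xh (m₁ - 1) < xh m₁) ∧
    (¬ ∃ m₁ m₂ : ℕ, 1 ≤ m₁ ∧ m₁ ≤ m₂ ∧ m₂ ≤ m ∧
        (∀ j : ℕ, m₁ ≤ j → j ≤ m₂ → xh j = xh m₁) ∧
        xh m₁ < -(My ^ 2 / (4 * lam)) ∧
        xh m₂ < xh (m₂ + 1) ∧ xh m₁ < xh (m₁ - 1)) := by
  have hsol (hm : 1 ≤ m) : FusedLasso.IsSolution m y lam xh := fun z h0 h1 => by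
    rw [← FusedLasso.sum_sq_add_mul_penalty_eq_objective hm y lam ha hb,
      ← FusedLasso.sum_sq_add_mul_penalty_eq_objective hm y lam (h0.trans ha) (h1.trans hb),
      ← hG, ← hG]
    exact hmin z
  refine ⟨?_, ?_⟩
  · rintro ⟨m₁, m₂, h1, h12, h2, hplat, hbig, hright, hleft⟩
    exact hbig.not_ge <| (hsol (by omega)).le_of_plateau hlam h1 h12 h2 hplat hleft hright
      ((le_abs_self _).trans (hy m₁ m₂ h1 h12 h2))
  · rintro ⟨m₁, m₂, h1, h12, h2, hplat, hsmall, hright, hleft⟩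
    have hS : ∑ i ∈ Icc m₁ m₂, (-y) i ≤ My * Real.sqrt ((m₂ : ℝ) - m₁ + 1) := by
      simp only [Pi.neg_apply, sum_neg_distrib]
      exact (neg_le_abs _).trans (hy m₁ m₂ h1 h12 h2)
    have hneg := (hsol (by omega)).neg.le_of_plateau hlam h1 h12 h2
      (fun j hj hj' => by simp [hplat j hj hj']) (by simpa using hleft) (by simpa using hright) hS
    simp only [Pi.neg_apply] at hneg
    linarith

/-- the fused lasso solution on one interval has no local maximum above
`My^2/(4*lam)` and no local minimum below `-My^2/(4*lam)` (Lemma 3.3 / `lemma:localmax`). -/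
theorem fused_lasso_one_interval_no_local_extremum
    (m : ℕ) (hm : 1 ≤ m)
    (y : ℕ → ℝ) (a b : ℝ) (lam My : ℝ) (hlam : 0 < lam) (hMy : 0 < My)
    (hy : ∀ k l : ℕ, 1 ≤ k → k ≤ l → l ≤ m →
      |∑ i ∈ Finset.Icc k l, y i| ≤ My * Real.sqrt (l - k + 1))
    (G : (ℕ → ℝ) → ℝ)
    (hG : ∀ z : ℕ → ℝ, G z =
      ∑ i ∈ Finset.Icc 1 m, (z i - y i) ^ 2
        + lam * (|z 1 - a| + |z m - b| + ∑ i ∈ Finset.Icc 1 (m - 1), |z i - z (i + 1)|))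
    (xh : ℕ → ℝ) (hmin : ∀ z : ℕ → ℝ, G xh ≤ G z)
    (ha : xh 0 = a) (hb : xh (m + 1) = b) :
    (¬ ∃ m₁ m₂ : ℕ, 1 ≤ m₁ ∧ m₁ ≤ m₂ ∧ m₂ ≤ m ∧
        (∀ j : ℕ, m₁ ≤ j → j ≤ m₂ → xh j = xh m₁) ∧
        My ^ 2 / (4 * lam) < xh m₁ ∧
        xh (m₂ + 1) < xh m₂ ∧ xh (m₁ - 1) < xh m₁) ∧
    (¬ ∃ m₁ m₂ : ℕ, 1 ≤ m₁ ∧ m₁ ≤ m₂ ∧ m₂ ≤ m ∧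
        (∀ j : ℕ, m₁ ≤ j → j ≤ m₂ → xh j = xh m₁) ∧
        xh m₁ < -(My ^ 2 / (4 * lam)) ∧
        xh m₂ < xh (m₂ + 1) ∧ xh m₁ < xh (m₁ - 1)) :=
  fused_lasso_one_interval_no_local_extremum_general m y a b lam My hlam hy G hG xh hmin ha hb
end

section
/- Let ε_1,...,ε_n be i.i.d. random vectors in ℝ^p, each with distribution N(0, σ²·I_p), let t > 0, and set M_y = σ·max(√(8(log n + log t) + p), 2√p). Then with probability at least 1 − 1/t², for all pairs 1 ≤ k ≤ l ≤ n one has ‖∑_{i=k}^{l} ε_i‖ ≤ M_y·√(l−k+1), where ‖·‖ is the Euclidean norm on ℝ^p. -/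
/-!
Fix a block `k ≤ i ≤ l` of length `m` and let `T ∈ ℝ^p` be its partial sum. Every linear form
`⟨z, T⟩` is a sum of independent centred Gaussians, so `E exp ⟨z, T⟩ = exp (m σ² ‖z‖² / 2)`.
Writing `exp (s ‖T‖² / (m σ²))` as `E_g exp ⟨√(2s / (m σ²)) g, T⟩` for a standard Gaussian
`g ∈ ℝ^p` and swapping the two expectations gives `E exp (s ‖T‖² / (m σ²)) = (1 - 2s)^(-p/2)`.
At `s = 3/8` the Chernoff bound reads `P (‖T‖ ≥ √(a m) σ) ≤ 2^p exp (-3a/8)`, and the choice of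
`M_y` makes the union bound over the at most `n²` blocks at most `1/t²`.
-/

open Finset MeasureTheory ProbabilityTheory Real
open scoped NNReal ENNReal

theorem mgf_sq_gaussianReal {s : ℝ} (hs : s < 1 / 2) :
    mgf (fun x => x ^ 2) (gaussianReal 0 1) s = (√(1 - 2 * s))⁻¹ := by
  have hb : 0 < 1 / 2 - s := by linarith
  have hdensity : ∀ x : ℝ, gaussianPDFReal 0 1 x • rexp (s * x ^ 2) =
      (√(2 * π))⁻¹ * rexp (-(1 / 2 - s) * x ^ 2) := by
    intro x
    rw [gaussianPDFReal, smul_eq_mul, mul_assoc, ← exp_add]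
    congr 3 <;> push_cast <;> ring
  rw [mgf, integral_gaussianReal_eq_integral_smul one_ne_zero]
  simp_rw [hdensity]
  rw [integral_const_mul, integral_gaussian, show π / (1 / 2 - s) = 2 * π / (1 - 2 * s) by
    field_simp, sqrt_div (by positivity), div_eq_mul_inv, ← mul_assoc,
    inv_mul_cancel₀ (by positivity), one_mul]

section StandardGaussian

variable {ι : Type*} [Fintype ι]

theorem mgf_sum_mul_pi_gaussianReal (x : ι → ℝ) :
    mgf (fun z => ∑ i, x i * z i) (Measure.pi fun _ : ι => gaussianReal 0 1) 1 =
      rexp (∑ i, x i ^ 2 / 2) := by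
  simp_rw [mgf, one_mul, exp_sum]
  rw [integral_fintype_prod_eq_prod (fun i z => rexp (x i * z))]
  refine prod_congr rfl fun i _ => ?_
  simpa [mgf] using congrFun (mgf_id_gaussianReal (μ := 0) (v := 1)) (x i)

theorem mgf_sum_sq_pi_gaussianReal {s : ℝ} (hs : s < 1 / 2) :
    mgf (fun z => ∑ i, z i ^ 2) (Measure.pi fun _ : ι => gaussianReal 0 1) s =
      (√(1 - 2 * s))⁻¹ ^ Fintype.card ι := by
  simp_rw [mgf, mul_sum, exp_sum]
  rw [integral_fintype_prod_eq_pow (fun z => rexp (s * z ^ 2)), ← mgf, mgf_sq_gaussianReal hs]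

end StandardGaussian

section GaussianMGF

variable {Ω ι : Type*} [MeasurableSpace Ω] [Fintype ι] {P : Measure Ω} {X : ι → Ω → ℝ}

theorem mgf_sum_sq_of_mgf_sum_mul [SFinite P] (hX : ∀ i, Measurable (X i)) {v : ℝ} (hv : 0 < v)
    (hmgf : ∀ z : ι → ℝ, mgf (fun ω => ∑ i, z i * X i ω) P 1 = rexp (v * ∑ i, z i ^ 2 / 2))
    {s : ℝ} (hs₀ : 0 ≤ s) (hs : s < 1 / 2) :
    mgf (fun ω => ∑ i, X i ω ^ 2) P (s / v) = (√(1 - 2 * s))⁻¹ ^ Fintype.card ι := by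
  set γ := Measure.pi fun _ : ι => gaussianReal 0 1
  set d := √(2 * s / v)
  have hd : d ^ 2 = 2 * s / v := sq_sqrt (by positivity)
  let F : (ι → ℝ) → Ω → ℝ := fun z ω => rexp (∑ i, d * z i * X i ω)
  have hinner : ∀ z, ∫ ω, F z ω ∂P = rexp (s * ∑ i, z i ^ 2) := by
    intro z
    have hz := hmgf (fun i => d * z i)
    simp only [mgf, one_mul] at hz
    rw [hz, mul_sum, mul_sum]
    congr 1
    refine sum_congr rfl fun i _ => ?_
    rw [mul_pow, hd]
    field_simp
  have houter : ∀ ω, ∫ z, F z ω ∂γ = rexp (s / v * ∑ i, X i ω ^ 2) := by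
    intro ω
    have hω := mgf_sum_mul_pi_gaussianReal (fun i => d * X i ω)
    simp only [mgf, one_mul] at hω
    have hF : ∀ z, F z ω = rexp (∑ i, d * X i ω * z i) := fun z =>
      congrArg rexp (sum_congr rfl fun i _ => by ring)
    rw [integral_congr_ae (ae_of_all _ hF), hω, mul_sum]
    congr 1
    refine sum_congr rfl fun i _ => ?_
    rw [mul_pow, hd]
    ring
  have hF : Integrable (Function.uncurry F) (γ.prod P) := by
    rw [integrable_prod_iff (by fun_prop)]
    refine ⟨ae_of_all _ fun z => .of_integral_ne_zero (hinner z ▸ (exp_pos _).ne'), ?_⟩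
    have hnorm : ∀ z ω, ‖F z ω‖ = F z ω := fun _ _ => norm_of_nonneg (exp_nonneg _)
    simp_rw [Function.uncurry_apply_pair, hnorm, hinner]
    refine .of_integral_ne_zero ?_
    rw [← mgf, mgf_sum_sq_pi_gaussianReal hs]
    exact pow_ne_zero _ (inv_ne_zero (sqrt_pos.2 (by linarith)).ne')
  calc mgf (fun ω => ∑ i, X i ω ^ 2) P (s / v) = ∫ ω, ∫ z, F z ω ∂γ ∂P := by
        simp only [mgf, houter]
    _ = ∫ z, ∫ ω, F z ω ∂P ∂γ := (integral_integral_swap hF).symm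
    _ = _ := by simp_rw [hinner]; exact mgf_sum_sq_pi_gaussianReal hs

theorem measureReal_sum_sq_ge_le [IsFiniteMeasure P] (hX : ∀ i, Measurable (X i)) {v : ℝ}
    (hv : 0 < v)
    (hmgf : ∀ z : ι → ℝ, mgf (fun ω => ∑ i, z i * X i ω) P 1 = rexp (v * ∑ i, z i ^ 2 / 2))
    {s : ℝ} (hs₀ : 0 ≤ s) (hs : s < 1 / 2) (a : ℝ) :
    P.real {ω | a * v ≤ ∑ i, X i ω ^ 2} ≤
      rexp (-s * a) * (√(1 - 2 * s))⁻¹ ^ Fintype.card ι := by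
  have hmgf_sq := mgf_sum_sq_of_mgf_sum_mul hX hv hmgf hs₀ hs
  have hint : Integrable (fun ω => rexp (s / v * ∑ i, X i ω ^ 2)) P := by
    refine .of_integral_ne_zero ?_
    rw [← mgf, hmgf_sq]
    exact pow_ne_zero _ (inv_ne_zero (sqrt_pos.2 (by linarith)).ne')
  have h := measure_ge_le_exp_mul_mgf (a * v) (by positivity) hint
  rwa [hmgf_sq, show -(s / v) * (a * v) = -s * a by field_simp] at h

end GaussianMGF

theorem ProbabilityTheory.iIndepFun.mgf_sum_mul_of_map_eq_gaussianReal {Ω ι : Type*}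
    [MeasurableSpace Ω] {P : Measure Ω} {Y : ι → Ω → ℝ} (h : iIndepFun Y P)
    (hY : ∀ i, Measurable (Y i)) {μ : ι → ℝ} {v : ι → ℝ≥0}
    (hlaw : ∀ i, P.map (Y i) = gaussianReal (μ i) (v i)) (a : ι → ℝ) (s : Finset ι) (t : ℝ) :
    mgf (fun ω => ∑ i ∈ s, a i * Y i ω) P t =
      rexp (∑ i ∈ s, (μ i * (a i * t) + v i * (a i * t) ^ 2 / 2)) := by
  have hW := h.comp (fun i x => a i * x) (fun i => measurable_const_mul (a i))
  rw [show (fun ω => ∑ i ∈ s, a i * Y i ω) = ∑ i ∈ s, (fun x => a i * x) ∘ Y i by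
      ext; simp,
    hW.mgf_sum (fun i => (hY i).const_mul _), exp_sum]
  refine prod_congr rfl fun i _ => ?_
  rw [Function.comp_def, mgf_const_mul, mgf_gaussianReal (hlaw i)]

section PartialSums

variable {Ω : Type*} [MeasurableSpace Ω] {P : Measure Ω} {n p : ℕ} {σ : ℝ≥0}
  {ε : ℕ → Ω → EuclideanSpace ℝ (Fin p)}

theorem mgf_sum_mul_partialSum (hmeas : ∀ i, Measurable (ε i))
    (hindep : iIndepFun
      (fun ij : (Finset.Icc 1 n : Finset ℕ) × Fin p => fun ω => ε ij.1 ω ij.2) P)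
    (hlaw : ∀ i : ℕ, 1 ≤ i → i ≤ n → ∀ j : Fin p,
      Measure.map (fun ω => ε i ω j) P = gaussianReal 0 (σ ^ 2))
    {k l : ℕ} (hk : 1 ≤ k) (hl : l ≤ n) (z : Fin p → ℝ) :
    mgf (fun ω => ∑ j, z j * ∑ i ∈ Icc k l, ε i ω j) P 1 =
      rexp (#(Icc k l) * σ ^ 2 * ∑ j, z j ^ 2 / 2) := by
  have hsub : Icc k l ⊆ Icc 1 n := Icc_subset_Icc hk hl
  let g : ↥(Icc k l) × Fin p → ↥(Icc 1 n) × Fin p :=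
    fun ij => (⟨ij.1, hsub ij.1.2⟩, ij.2)
  have hg : g.Injective := by
    rintro ⟨⟨i, hi⟩, j⟩ ⟨⟨i', hi'⟩, j'⟩ h
    simp_all [g]
  have key := (hindep.precomp hg).mgf_sum_mul_of_map_eq_gaussianReal (by fun_prop)
    (fun ij => hlaw _ (mem_Icc.1 (hsub ij.1.2)).1 (mem_Icc.1 (hsub ij.1.2)).2 ij.2)
    (fun ij => z ij.2) univ 1
  convert key using 2
  · ext ω
    rw [Fintype.sum_prod_type, sum_comm]
    refine sum_congr rfl fun j _ => ?_
    rw [mul_sum, ← sum_coe_sort (Icc k l)]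
  · rw [Fintype.sum_prod_type, sum_comm, mul_sum]
    refine sum_congr rfl fun j _ => ?_
    simp only [Nat.card_Icc, univ_eq_attach, mul_one, zero_mul, NNReal.coe_pow, zero_add,
      sum_const, card_attach, nsmul_eq_mul]
    ring

theorem measure_le_norm_partialSum_le [IsFiniteMeasure P] (hmeas : ∀ i, Measurable (ε i))
    (hindep : iIndepFun
      (fun ij : (Finset.Icc 1 n : Finset ℕ) × Fin p => fun ω => ε ij.1 ω ij.2) P)
    (hlaw : ∀ i : ℕ, 1 ≤ i → i ≤ n → ∀ j : Fin p,
      Measure.map (fun ω => ε i ω j) P = gaussianReal 0 (σ ^ 2))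
    (hσ : 0 < σ) {k l : ℕ} (hk : 1 ≤ k) (hkl : k ≤ l) (hl : l ≤ n) {a : ℝ} (ha : 0 ≤ a) :
    P {ω | σ * √a * √(l - k + 1) ≤ ‖∑ i ∈ Icc k l, ε i ω‖} ≤
      ENNReal.ofReal (rexp (-(3 / 8) * a) * 2 ^ p) := by
  have hcard : (#(Icc k l) : ℝ) = l - k + 1 := by
    rw [Nat.card_Icc, Nat.cast_sub (by omega)]
    push_cast
    ring
  have hlength : (0 : ℝ) < l - k + 1 := by
    rw [← hcard]
    exact_mod_cast card_pos.2 (nonempty_Icc.2 hkl)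
  have hv : (0 : ℝ) < #(Icc k l) * σ ^ 2 := by rw [hcard]; positivity
  have htail := measureReal_sum_sq_ge_le (X := fun j ω => ∑ i ∈ Icc k l, ε i ω j)
    (by fun_prop) hv (mgf_sum_mul_partialSum hmeas hindep hlaw hk hl) (s := 3 / 8)
    (by norm_num) (by norm_num) a
  rw [show (√(1 - 2 * (3 / 8 : ℝ)))⁻¹ = 2 by
    rw [show (1 : ℝ) - 2 * (3 / 8) = (1 / 2) ^ 2 by norm_num, sqrt_sq (by norm_num)]; norm_num,
    Fintype.card_fin] at htail
  have hradius : (σ * √a * √(l - k + 1)) ^ 2 = a * (#(Icc k l) * σ ^ 2) := by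
    rw [mul_pow, mul_pow, sq_sqrt ha, sq_sqrt hlength.le, hcard]
    ring
  calc P {ω | σ * √a * √(l - k + 1) ≤ ‖∑ i ∈ Icc k l, ε i ω‖}
      ≤ P {ω | a * (#(Icc k l) * σ ^ 2) ≤ ∑ j, (∑ i ∈ Icc k l, ε i ω j) ^ 2} := by
        refine measure_mono fun ω (hω : σ * √a * √(l - k + 1) ≤ _) => ?_
        simpa [hradius, EuclideanSpace.norm_sq_eq] using pow_le_pow_left₀ (by positivity) hω 2
    _ = ENNReal.ofReal
          (P.real {ω | a * (#(Icc k l) * σ ^ 2) ≤ ∑ j, (∑ i ∈ Icc k l, ε i ω j) ^ 2}) :=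
        (ofReal_measureReal (measure_ne_top _ _)).symm
    _ ≤ _ := ENNReal.ofReal_le_ofReal htail

end PartialSums

theorem mul_self_mul_exp_mul_two_pow_le_one_div_sq (n p : ℕ) {t : ℝ} (ht : 0 < t) {a : ℝ}
    (ha₁ : 8 * (log n + log t) + p ≤ a) (ha₂ : 4 * p ≤ a) :
    (n : ℝ) * n * (rexp (-(3 / 8) * a) * 2 ^ p) ≤ 1 / t ^ 2 := by
  rcases n.eq_zero_or_pos with rfl | hn
  · simp only [CharP.cast_eq_zero, zero_mul]
    positivity
  have hn₀ : (n : ℝ) ≠ 0 := by positivity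
  have hlhs : (n : ℝ) * n * (rexp (-(3 / 8) * a) * 2 ^ p) =
      rexp (2 * log n - 3 / 8 * a + p * log 2) := by
    rw [show 2 * log n - 3 / 8 * a + p * log 2 = log (n * n) + -(3 / 8) * a + log (2 ^ p) by
      rw [log_mul hn₀ hn₀, log_pow]; ring, exp_add, exp_add, exp_log (by positivity),
      exp_log (by positivity)]
    ring
  have hrhs : 1 / t ^ 2 = rexp (-(2 * log t)) := by
    rw [show 2 * log t = log (t ^ 2) by rw [log_pow]; norm_num, exp_neg,
      exp_log (by positivity), one_div]
  have hlog2 : p * log 2 ≤ p * (3 / 4) :=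
    mul_le_mul_of_nonneg_left (log_two_lt_d9.le.trans (by norm_num)) p.cast_nonneg
  rw [hlhs, hrhs, exp_le_exp]
  -- `3/8 a ≥ 1/4 (8 (log n + log t) + p) + 1/8 (4 p)`, and `log 2 < 3/4`
  linarith

theorem ofReal_one_sub_le_measure_of_measure_compl_le {Ω : Type*} [MeasurableSpace Ω]
    {P : Measure Ω} [IsProbabilityMeasure P] {s : Set Ω} {δ : ℝ} (hδ : 0 ≤ δ)
    (h : P sᶜ ≤ ENNReal.ofReal δ) : ENNReal.ofReal (1 - δ) ≤ P s := by
  have hcover : 1 ≤ P s + P sᶜ := by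
    calc 1 = P (s ∪ sᶜ) := by rw [Set.union_compl_self, measure_univ]
      _ ≤ P s + P sᶜ := measure_union_le _ _
  calc ENNReal.ofReal (1 - δ) = 1 - ENNReal.ofReal δ := by
        rw [ENNReal.ofReal_sub _ hδ, ENNReal.ofReal_one]
    _ ≤ 1 - P sᶜ := tsub_le_tsub_left h _
    _ ≤ P s := tsub_le_iff_right.2 hcover

theorem measure_biUnion_finset_le_ofReal_card_mul {Ω ι : Type*} [MeasurableSpace Ω]
    {P : Measure Ω} {s : Finset ι} {f : ι → Set Ω} {c : ℝ}
    (h : ∀ i ∈ s, P (f i) ≤ ENNReal.ofReal c) :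
    P (⋃ i ∈ s, f i) ≤ ENNReal.ofReal (#s * c) := by
  rw [← nsmul_eq_mul, ENNReal.ofReal_nsmul]
  exact (measure_biUnion_finset_le _ _).trans (sum_le_card_nsmul _ _ _ h)

theorem gaussian_vector_partial_sums_bound_general
    {Ω : Type*} [MeasurableSpace Ω] (P : Measure Ω) [IsProbabilityMeasure P]
    (n p : ℕ) (σ : ℝ≥0) (hσ : 0 < σ) (t : ℝ) (ht : 0 < t)
    (ε : ℕ → Ω → EuclideanSpace ℝ (Fin p))
    (hmeas : ∀ i, Measurable (ε i))
    -- all coordinates of `ε_1, …, ε_n` are independent, each `N(0, σ²)`: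
    -- this encodes that `ε_1, …, ε_n` are i.i.d. `N(0, σ² I_p)`
    (hindep : iIndepFun
      (fun ij : (Finset.Icc 1 n : Finset ℕ) × Fin p => fun ω => ε ij.1 ω ij.2) P)
    (hlaw : ∀ i : ℕ, 1 ≤ i → i ≤ n → ∀ j : Fin p,
      Measure.map (fun ω => ε i ω j) P = gaussianReal 0 (σ ^ 2))
    (My : ℝ)
    (hMy : My = σ * max (Real.sqrt (8 * (Real.log n + Real.log t) + p))
      (2 * Real.sqrt p)) :
    ENNReal.ofReal (1 - 1 / t ^ 2) ≤
      P {ω | ∀ k l : ℕ, 1 ≤ k → k ≤ l → l ≤ n →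
        ‖∑ i ∈ Finset.Icc k l, ε i ω‖ ≤ My * Real.sqrt (l - k + 1)} := by
  have hMy' : My = σ * √(max (8 * (log n + log t) + p) (4 * p)) := by
    rw [hMy, sqrt_monotone.map_max, show (4 : ℝ) * p = 2 ^ 2 * p by norm_num,
      sqrt_mul (by norm_num), sqrt_sq zero_le_two]
  set a : ℝ := max (8 * (log n + log t) + p) (4 * p)
  set β : ℝ := rexp (-(3 / 8) * a) * 2 ^ p
  let pairs := (Icc 1 n ×ˢ Icc 1 n).filter fun q : ℕ × ℕ => q.1 ≤ q.2
  let bad : ℕ × ℕ → Set Ω :=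
    fun q => {ω | σ * √a * √(q.2 - q.1 + 1) ≤ ‖∑ i ∈ Icc q.1 q.2, ε i ω‖}
  have hcompl : {ω | ∀ k l : ℕ, 1 ≤ k → k ≤ l → l ≤ n →
      ‖∑ i ∈ Icc k l, ε i ω‖ ≤ My * √(l - k + 1)}ᶜ ⊆ ⋃ q ∈ pairs, bad q := by
    intro ω hω
    simp only [Set.mem_compl_iff, Set.mem_ofPred_eq, not_forall, not_le, hMy'] at hω
    obtain ⟨k, l, hk, hkl, hl, hlt⟩ := hω
    refine Set.mem_biUnion (x := (k, l)) ?_ hlt.le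
    simp only [pairs, coe_filter, mem_product, mem_Icc, Set.mem_ofPred_eq]
    omega
  have hbad : ∀ q ∈ pairs, P (bad q) ≤ ENNReal.ofReal β := by
    intro q hq
    simp only [pairs, mem_filter, mem_product, mem_Icc] at hq
    exact measure_le_norm_partialSum_le hmeas hindep hlaw hσ hq.1.1.1 hq.2 hq.1.2.2
      (le_max_of_le_right (by positivity))
  have hcard : #pairs ≤ n * n := (card_filter_le _ _).trans (by simp)
  refine ofReal_one_sub_le_measure_of_measure_compl_le (by positivity) ?_
  calc _ ≤ P (⋃ q ∈ pairs, bad q) := measure_mono hcompl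
    _ ≤ ENNReal.ofReal (#pairs * β) := measure_biUnion_finset_le_ofReal_card_mul hbad
    _ ≤ ENNReal.ofReal (1 / t ^ 2) := by
      refine ENNReal.ofReal_le_ofReal (le_trans ?_ (mul_self_mul_exp_mul_two_pow_le_one_div_sq
        n p ht (le_max_left _ _) (le_max_right _ _)))
      gcongr
      exact_mod_cast hcard

/-- Lemma 4.1: with probability at least `1 - 1/t²`, all partial sums of `n`
i.i.d. `N(0, σ² I_p)` random vectors are bounded in Euclidean norm by `M_y √(l-k+1)`,
where `M_y = σ max(√(8(log n + log t) + p), 2√p)`. -/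
theorem gaussian_vector_partial_sums_bound
    {Ω : Type*} [MeasurableSpace Ω] (P : Measure Ω) [IsProbabilityMeasure P]
    (n p : ℕ) (hn : 1 ≤ n) (hp : 1 ≤ p) (σ : ℝ≥0) (hσ : 0 < σ) (t : ℝ) (ht : 0 < t)
    (ε : ℕ → Ω → EuclideanSpace ℝ (Fin p))
    (hmeas : ∀ i, Measurable (ε i))
    -- all coordinates of `ε_1, …, ε_n` are independent, each `N(0, σ²)`:
    -- this encodes that `ε_1, …, ε_n` are i.i.d. `N(0, σ² I_p)`
    (hindep : iIndepFun
      (fun ij : (Finset.Icc 1 n : Finset ℕ) × Fin p => fun ω => ε ij.1 ω ij.2) P)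
    (hlaw : ∀ i : ℕ, 1 ≤ i → i ≤ n → ∀ j : Fin p,
      Measure.map (fun ω => ε i ω j) P = gaussianReal 0 (σ ^ 2))
    (My : ℝ)
    (hMy : My = σ * max (Real.sqrt (8 * (Real.log n + Real.log t) + p))
      (2 * Real.sqrt p)) :
    ENNReal.ofReal (1 - 1 / t ^ 2) ≤
      P {ω | ∀ k l : ℕ, 1 ≤ k → k ≤ l → l ≤ n →
        ‖∑ i ∈ Finset.Icc k l, ε i ω‖ ≤ My * Real.sqrt (l - k + 1)} :=
  gaussian_vector_partial_sums_bound_general P n p σ hσ t ht ε hmeas hindep hlaw My hMy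
end

section
/- Let x̂ = (x̂_1,...,x̂_m) minimize the one-interval group fused lasso objective G(x_1,...,x_m) = ∑_{i=1}^m ‖x_i − y_i‖² + λ(‖a − x_1‖ + ‖x_m − b‖ + ∑_{i=1}^{m−1} ‖x_i − x_{i+1}‖) over (ℝ^p)^m, with the conventions x̂_0 = a and x̂_{m+1} = b. For indices i with x̂_i ≠ x̂_{i+1} define the unit vector u_i = (x̂_{i+1} − x̂_i)/‖x̂_{i+1} − x̂_i‖. Then for any 1 ≤ k ≤ l ≤ m with x̂_{k−1} ≠ x̂_k and x̂_l ≠ x̂_{l+1}, one has 2·∑_{i=k}^{l} (x̂_i − y_i) + λ·(u_{k−1} − u_l) = 0. -/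
/-!
Perturb `x̂` by `t • v` on the block `k, …, l` only. Every difference `x̂ᵢ - x̂ᵢ₊₁` is then
unchanged except the two at the ends of the block, where `x̂` jumps by hypothesis, so the norm is
differentiable there and `t ↦ G (x̂ + t • w)` is differentiable at its minimum `t = 0`. Its
derivative is `⟪2 ∑ᵢ₌ₖˡ (x̂ᵢ - yᵢ) + λ (u_{k-1} - u_l), v⟫`, and taking `v` to be that vector
itself forces it to vanish.
-/

open Finset RealInnerProductSpace

section
variable {E : Type*} [NormedAddCommGroup E] [InnerProductSpace ℝ E]

theorem hasDerivAt_norm_add_smul_sq (c d : E) :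
    HasDerivAt (fun t : ℝ => ‖c + t • d‖ ^ 2) (2 * ⟪c, d⟫) 0 := by
  simpa using (((hasDerivAt_id (0 : ℝ)).smul_const d).const_add c).norm_sq

-- For `d = 0` the formula also holds at `c = 0`, where `⟪c, d⟫ / ‖c‖ = 0 / 0 = 0`.
theorem hasDerivAt_norm_add_smul {c d : E} (h : c ≠ 0 ∨ d = 0) :
    HasDerivAt (fun t : ℝ => ‖c + t • d‖) (⟪c, d⟫ / ‖c‖) 0 := by
  rcases h with hc | rfl
  · have hsqrt := (hasDerivAt_norm_add_smul_sq c d).sqrt (by simpa using hc)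
    simp only [Real.sqrt_sq (norm_nonneg _), zero_smul, add_zero] at hsqrt
    convert hsqrt using 1
    ring
  · simpa using hasDerivAt_const (0 : ℝ) ‖c‖

theorem hasDerivAt_sum_norm_add_smul_sub_sq {ι : Type*} (s : Finset ι) (z y w : ι → E) :
    HasDerivAt (fun t : ℝ => ∑ i ∈ s, ‖(z + t • w) i - y i‖ ^ 2)
      (∑ i ∈ s, 2 * ⟪z i - y i, w i⟫) 0 := by
  refine HasDerivAt.fun_sum fun i _ =>
    (hasDerivAt_norm_add_smul_sq (z i - y i) (w i)).congr_of_eventuallyEq (.of_forall fun t => ?_)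
  simp only [Pi.add_apply, Pi.smul_apply, sub_add_eq_add_sub]

theorem hasDerivAt_sum_norm_add_smul_sub_succ (s : Finset ℕ) (z w : ℕ → E)
    (h : ∀ i ∈ s, z i ≠ z (i + 1) ∨ w i = w (i + 1)) :
    HasDerivAt (fun t : ℝ => ∑ i ∈ s, ‖(z + t • w) i - (z + t • w) (i + 1)‖)
      (∑ i ∈ s, ⟪z i - z (i + 1), w i - w (i + 1)⟫ / ‖z i - z (i + 1)‖) 0 := by
  have hsmooth : ∀ i ∈ s, z i - z (i + 1) ≠ 0 ∨ w i - w (i + 1) = 0 := by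
    simpa only [ne_eq, sub_eq_zero] using h
  refine HasDerivAt.fun_sum fun i hi => (hasDerivAt_norm_add_smul
    (hsmooth i hi)).congr_of_eventuallyEq (.of_forall fun t => ?_)
  simp only [Pi.add_apply, Pi.smul_apply, smul_sub]
  abel_nf

theorem Finset.sum_Icc_zero_eq_add_add_sum_Icc {M : Type*} [AddCommMonoid M] (f : ℕ → M)
    {m : ℕ} (hm : 1 ≤ m) :
    ∑ i ∈ Icc 0 m, f i = f 0 + f m + ∑ i ∈ Icc 1 (m - 1), f i := by
  have h0 : Icc 0 m = insert 0 (Icc 1 m) := by ext; simp; omega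
  have hm' : Icc 1 m = insert m (Icc 1 (m - 1)) := by ext; simp; omega
  rw [h0, sum_insert (by simp), hm', sum_insert (by simp; omega), add_assoc]

theorem fusedLasso_first_variation_eq_zero {m : ℕ} (hm : 1 ≤ m) {y : ℕ → E} {a b : E}
    {lam : ℝ} {G : (ℕ → E) → ℝ}
    (hG : ∀ z : ℕ → E, G z = ∑ i ∈ Icc 1 m, ‖z i - y i‖ ^ 2
        + lam * (‖a - z 1‖ + ‖z m - b‖ + ∑ i ∈ Icc 1 (m - 1), ‖z i - z (i + 1)‖))
    {xh : ℕ → E} (hmin : ∀ z, G xh ≤ G z) (ha : xh 0 = a) (hb : xh (m + 1) = b)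
    {w : ℕ → E} (hw0 : w 0 = 0) (hwm : w (m + 1) = 0)
    (hw : ∀ i ∈ Icc 0 m, xh i ≠ xh (i + 1) ∨ w i = w (i + 1)) :
    ∑ i ∈ Icc 1 m, 2 * ⟪xh i - y i, w i⟫
      + lam * ∑ i ∈ Icc 0 m, ⟪xh i - xh (i + 1), w i - w (i + 1)⟫ / ‖xh i - xh (i + 1)‖ = 0 := by
  have hline : ∀ t : ℝ, G (xh + t • w) = ∑ i ∈ Icc 1 m, ‖(xh + t • w) i - y i‖ ^ 2
      + lam * ∑ i ∈ Icc 0 m, ‖(xh + t • w) i - (xh + t • w) (i + 1)‖ := by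
    intro t
    simp [hG, sum_Icc_zero_eq_add_add_sum_Icc _ hm, ha, hb, hw0, hwm]
  have hlocal : IsLocalMin (fun t : ℝ => G (xh + t • w)) 0 :=
    .of_forall fun t => by simpa using hmin (xh + t • w)
  refine hlocal.hasDerivAt_eq_zero ?_
  simp_rw [hline]
  exact (hasDerivAt_sum_norm_add_smul_sub_sq _ _ _ _).add
    ((hasDerivAt_sum_norm_add_smul_sub_succ _ _ _ hw).const_mul lam)

theorem indicator_Icc_sub_indicator_succ {M : Type*} [AddGroup M] {k l : ℕ}
    (hk : 1 ≤ k) (hkl : k ≤ l) (v : M) (i : ℕ) :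
    (Finset.Icc k l : Set ℕ).indicator (fun _ => v) i
        - (Finset.Icc k l : Set ℕ).indicator (fun _ => v) (i + 1)
      = (if i = l then v else 0) - (if i = k - 1 then v else 0) := by
  simp only [Set.indicator, coe_Icc, Set.mem_Icc]
  split_ifs <;> first | omega | simp

theorem sum_inner_indicator_Icc_sub_succ_div_norm {m k l : ℕ} (hk : 1 ≤ k) (hkl : k ≤ l)
    (hlm : l ≤ m) (c : ℕ → E) (v : E) :
    ∑ i ∈ Icc 0 m, ⟪c i, (Finset.Icc k l : Set ℕ).indicator (fun _ => v) i
        - (Finset.Icc k l : Set ℕ).indicator (fun _ => v) (i + 1)⟫ / ‖c i‖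
      = ⟪c l, v⟫ / ‖c l‖ - ⟪c (k - 1), v⟫ / ‖c (k - 1)‖ := by
  have hite : ∀ i j,
      ⟪c i, if i = j then v else 0⟫ / ‖c i‖ = if i = j then ⟪c i, v⟫ / ‖c i‖ else 0 := by
    intro i j; split_ifs <;> simp
  simp only [indicator_Icc_sub_indicator_succ hk hkl, inner_sub_right, sub_div, hite,
    sum_sub_distrib, sum_ite_eq', mem_Icc]
  rw [if_pos (by omega), if_pos (by omega)]

theorem inner_sub_div_norm_sub (x y v : E) :
    ⟪x - y, v⟫ / ‖x - y‖ = -⟪‖y - x‖⁻¹ • (y - x), v⟫ := by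
  rw [← neg_sub y x, inner_neg_left, norm_neg, real_inner_smul_left]
  ring

end

theorem group_fused_lasso_first_order_condition_general
    (p m : ℕ)
    (y : ℕ → EuclideanSpace ℝ (Fin p)) (a b : EuclideanSpace ℝ (Fin p))
    (lam : ℝ)
    (G : (ℕ → EuclideanSpace ℝ (Fin p)) → ℝ)
    (hG : ∀ z : ℕ → EuclideanSpace ℝ (Fin p), G z =
      ∑ i ∈ Finset.Icc 1 m, ‖z i - y i‖ ^ 2
        + lam * (‖a - z 1‖ + ‖z m - b‖ + ∑ i ∈ Finset.Icc 1 (m - 1), ‖z i - z (i + 1)‖))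
    (xh : ℕ → EuclideanSpace ℝ (Fin p))
    (hmin : ∀ z : ℕ → EuclideanSpace ℝ (Fin p), G xh ≤ G z)
    (ha : xh 0 = a) (hb : xh (m + 1) = b)
    (u : ℕ → EuclideanSpace ℝ (Fin p))
    (hu : ∀ i : ℕ, xh i ≠ xh (i + 1) → u i = ‖xh (i + 1) - xh i‖⁻¹ • (xh (i + 1) - xh i)) :
    ∀ k l : ℕ, 1 ≤ k → k ≤ l → l ≤ m →
      xh (k - 1) ≠ xh k → xh l ≠ xh (l + 1) →
      (2 : ℝ) • (∑ i ∈ Finset.Icc k l, (xh i - y i)) + lam • (u (k - 1) - u l) = 0 := by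
  intro k l hk hkl hlm hk' hl'
  have hk1 : k - 1 + 1 = k := by omega
  set S := (2 : ℝ) • (∑ i ∈ Icc k l, (xh i - y i)) + lam • (u (k - 1) - u l)
  set w := (Finset.Icc k l : Set ℕ).indicator fun _ => S
  have hw : ∀ i ∈ Icc 0 m, xh i ≠ xh (i + 1) ∨ w i = w (i + 1) := by
    intro i _
    by_cases hil : i = l
    · exact .inl (hil ▸ hl')
    by_cases hik : i = k - 1
    · exact .inl (hik ▸ hk1 ▸ hk')
    · right
      simpa only [hil, hik, if_false, sub_zero, sub_eq_zero] using
        indicator_Icc_sub_indicator_succ hk hkl S i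
  have hvar := fusedLasso_first_variation_eq_zero (by omega) hG hmin ha hb (w := w)
    (by simp [w]; omega) (by simp [w]; omega) hw
  rw [sum_inner_indicator_Icc_sub_succ_div_norm hk hkl hlm,
    sum_indicator_subset_of_eq_zero (fun _ => S) (fun i x => 2 * ⟪xh i - y i, x⟫)
      (Icc_subset_Icc hk hlm) (by simp), ← mul_sum, ← sum_inner,
    inner_sub_div_norm_sub, inner_sub_div_norm_sub, ← hu l hl',
    ← hu (k - 1) (by rwa [hk1])] at hvar
  refine (inner_self_eq_zero (𝕜 := ℝ)).mp ?_
  rw [inner_add_left, real_inner_smul_left, real_inner_smul_left, inner_sub_left]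
  linarith

/-- Lemma 4.3: first-order condition for the one-interval group fused lasso:
`2 ∑_{i=k}^{l} (x̂_i - y_i) + λ (u_{k-1} - u_l) = 0` whenever `x̂_{k-1} ≠ x̂_k` and
`x̂_l ≠ x̂_{l+1}`, where `u_i = (x̂_{i+1} - x̂_i)/‖x̂_{i+1} - x̂_i‖`. -/
theorem group_fused_lasso_first_order_condition
    (p m : ℕ) (hp : 1 ≤ p) (hm : 1 ≤ m)
    (y : ℕ → EuclideanSpace ℝ (Fin p)) (a b : EuclideanSpace ℝ (Fin p))
    (lam : ℝ) (hlam : 0 < lam)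
    (G : (ℕ → EuclideanSpace ℝ (Fin p)) → ℝ)
    (hG : ∀ z : ℕ → EuclideanSpace ℝ (Fin p), G z =
      ∑ i ∈ Finset.Icc 1 m, ‖z i - y i‖ ^ 2
        + lam * (‖a - z 1‖ + ‖z m - b‖ + ∑ i ∈ Finset.Icc 1 (m - 1), ‖z i - z (i + 1)‖))
    (xh : ℕ → EuclideanSpace ℝ (Fin p))
    (hmin : ∀ z : ℕ → EuclideanSpace ℝ (Fin p), G xh ≤ G z)
    (ha : xh 0 = a) (hb : xh (m + 1) = b)
    (u : ℕ → EuclideanSpace ℝ (Fin p))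
    (hu : ∀ i : ℕ, xh i ≠ xh (i + 1) → u i = ‖xh (i + 1) - xh i‖⁻¹ • (xh (i + 1) - xh i)) :
    ∀ k l : ℕ, 1 ≤ k → k ≤ l → l ≤ m →
      xh (k - 1) ≠ xh k → xh l ≠ xh (l + 1) →
      (2 : ℝ) • (∑ i ∈ Finset.Icc k l, (xh i - y i)) + lam • (u (k - 1) - u l) = 0 :=
  group_fused_lasso_first_order_condition_general p m y a b lam G hG xh hmin ha hb u hu
end

section
/- Let y_1,...,y_m, a, b ∈ ℝ^p, λ > 0, M_y > 0 with ‖∑_{i=k}^{l} y_i‖ ≤ M_y·√(l−k+1) for all 1 ≤ k ≤ l ≤ m, and assume λ < (7m − √m)·M_y. Let x̂ minimize the one-interval group fused lasso objective G(x_1,...,x_m) = ∑_{i=1}^m ‖x_i − y_i‖² + λ(‖a − x_1‖ + ‖x_m − b‖ + ∑_{i=1}^{m−1} ‖x_i − x_{i+1}‖). Then max_{1 ≤ i ≤ m} ‖x̂_i‖ ≤ 25·M_y. -/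
/-!
A minimizer `x̂` satisfies the variational inequality
`0 ≤ 2 ∑ ⟪z i - x̂ i, x̂ i - y i⟫ + λ (P z - P x̂)` for the convex penalty `P`, which is the total
variation of the path `a, z 1, …, z m, b`. Testing it against changes of `x̂` on one window `[k, l]`
gives everything: shifting the window gives `‖∑ (x̂ i - y i)‖ ≤ λ`; merging two neighbours gives
`|‖x̂ (t+1)‖² - ‖x̂ t‖²| ≤ 2 M_y ‖x̂ t - x̂ (t+1)‖`; flattening the window to the constant `0`
bounds its variation by `‖x̂ k‖ + ‖x̂ l‖ + N M_y² / (2λ)`, and flattening it to its mean produces a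
point within `M_y` of the mean.

If `λ < M_y` the pointwise bound `‖x̂ j - y j‖ ≤ λ` suffices. Otherwise take a maximiser `j` of
`‖x̂ i‖` and a window around it of length `N ≤ 2λ / M_y`, either `[1, m]` (where
`λ < (7m - √m) M_y` is used) or one with `N M_y ≥ λ`. Its mean has norm at most `7 M_y`, so some
`‖x̂ t‖ ≤ 8 M_y`, and the two variation bounds give `‖x̂ j‖² ≤ 64 M_y² + 2 M_y (2 ‖x̂ j‖ + M_y)`,
hence `‖x̂ j‖ ≤ 11 M_y`.
-/

open Finset Filter Topology RealInnerProductSpace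

namespace FusedLasso

section Variation

variable {E : Type*} [SeminormedAddCommGroup E]

def variation (x : ℕ → E) (k l : ℕ) : ℝ := ∑ i ∈ Ico k l, ‖x i - x (i + 1)‖

lemma variation_add (x : ℕ → E) {k l r : ℕ} (hkl : k ≤ l) (hlr : l ≤ r) :
    variation x k l + variation x l r = variation x k r :=
  sum_Ico_consecutive _ hkl hlr

lemma variation_succ (x : ℕ → E) (k : ℕ) : variation x k (k + 1) = ‖x k - x (k + 1)‖ := by
  simp [variation]

lemma variation_const (c : E) (k l : ℕ) : variation (fun _ => c) k l = 0 := by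
  simp [variation]

lemma variation_congr {x x' : ℕ → E} {k l : ℕ} (h : ∀ i, k ≤ i → i ≤ l → x i = x' i) :
    variation x k l = variation x' k l :=
  sum_congr rfl fun i hi => by
    rw [mem_Ico] at hi
    rw [h i hi.1 hi.2.le, h (i + 1) (by omega) hi.2]

lemma norm_sub_le_variation (x : ℕ → E) {k l : ℕ} (hkl : k ≤ l) :
    ‖x k - x l‖ ≤ variation x k l := by
  simpa only [variation, dist_eq_norm] using dist_le_Ico_sum_dist x hkl

lemma variation_piecewise_le (x w : ℕ → E) {p k l q : ℕ} (hpk : p < k) (hkl : k ≤ l)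
    (hlq : l < q) :
    variation ((Icc k l).piecewise w x) p q
      ≤ variation x p q + (‖w k - x k‖ + ‖w l - x l‖ + variation w k l - variation x k l) := by
  obtain ⟨k, rfl⟩ : ∃ k', k = k' + 1 := ⟨k - 1, by omega⟩
  have split (v : ℕ → E) : variation v p q = variation v p k + ‖v k - v (k + 1)‖
      + variation v (k + 1) l + ‖v l - v (l + 1)‖ + variation v (l + 1) q := by
    rw [← variation_succ, ← variation_succ]
    linarith [variation_add v (by omega : p ≤ k) (by omega : k ≤ k + 1),
      variation_add v (by omega : p ≤ k + 1) hkl,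
      variation_add v (by omega : p ≤ l) (by omega : l ≤ l + 1),
      variation_add v (by omega : p ≤ l + 1) (by omega : l + 1 ≤ q)]
  set z := (Icc (k + 1) l).piecewise w x
  have hz : ∀ i, z i = if k + 1 ≤ i ∧ i ≤ l then w i else x i := fun i => by
    simp [z, Finset.piecewise, mem_Icc]
  have hleft : variation z p k = variation x p k := variation_congr fun i _ hi => by
    rw [hz, if_neg (by omega)]
  have hright : variation z (l + 1) q = variation x (l + 1) q := variation_congr fun i hi _ => by
    rw [hz, if_neg (by omega)]
  have hmid : variation z (k + 1) l = variation w (k + 1) l := variation_congr fun i hi hi' => by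
    rw [hz, if_pos ⟨hi, hi'⟩]
  have e1 : z k = x k := by rw [hz, if_neg (by omega)]
  have e2 : z (k + 1) = w (k + 1) := by rw [hz, if_pos ⟨le_rfl, hkl⟩]
  have e3 : z l = w l := by rw [hz, if_pos ⟨hkl, le_rfl⟩]
  have e4 : z (l + 1) = x (l + 1) := by rw [hz, if_neg (by omega)]
  have t1 : ‖x k - w (k + 1)‖ ≤ ‖x k - x (k + 1)‖ + ‖w (k + 1) - x (k + 1)‖ := by
    rw [norm_sub_rev (w _)]; exact norm_sub_le_norm_sub_add_norm_sub _ _ _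
  have t2 : ‖w l - x (l + 1)‖ ≤ ‖w l - x l‖ + ‖x l - x (l + 1)‖ :=
    norm_sub_le_norm_sub_add_norm_sub _ _ _
  rw [split z, split x, hleft, hright, hmid, e1, e2, e3, e4]
  linarith

end Variation

section Average

variable {E : Type*} [SeminormedAddCommGroup E] [NormedSpace ℝ E]

lemma card_mul_norm_sub_average_le {ι : Type*} (s : Finset ι) (f : ι → E) (u : E) :
    (#s : ℝ) * ‖u - (#s : ℝ)⁻¹ • ∑ i ∈ s, f i‖ ≤ ∑ i ∈ s, ‖u - f i‖ := by
  rcases s.eq_empty_or_nonempty with rfl | hs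
  · simp
  have hN : (#s : ℝ) ≠ 0 := by positivity
  calc (#s : ℝ) * ‖u - (#s : ℝ)⁻¹ • ∑ i ∈ s, f i‖
      = ‖∑ i ∈ s, (u - f i)‖ := by
        rw [sum_sub_distrib, sum_const, ← Nat.cast_smul_eq_nsmul ℝ,
          ← smul_inv_smul₀ hN (∑ i ∈ s, f i), ← smul_sub, norm_smul, Real.norm_of_nonneg (by positivity), inv_smul_smul₀ hN]
    _ ≤ ∑ i ∈ s, ‖u - f i‖ := norm_sum_le _ _

lemma norm_sub_average_add_norm_sub_average_le_variation (x : ℕ → E) {k l : ℕ} (hkl : k ≤ l) :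
    ‖x k - (#(Icc k l) : ℝ)⁻¹ • ∑ i ∈ Icc k l, x i‖
      + ‖x l - (#(Icc k l) : ℝ)⁻¹ • ∑ i ∈ Icc k l, x i‖ ≤ variation x k l := by
  have hN : (0 : ℝ) < #(Icc k l) := by simp [hkl]
  refine le_of_mul_le_mul_left ?_ hN
  calc (#(Icc k l) : ℝ) * (‖x k - (#(Icc k l) : ℝ)⁻¹ • ∑ i ∈ Icc k l, x i‖
        + ‖x l - (#(Icc k l) : ℝ)⁻¹ • ∑ i ∈ Icc k l, x i‖)
      ≤ ∑ j ∈ Icc k l, (‖x k - x j‖ + ‖x l - x j‖) := by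
        rw [mul_add, sum_add_distrib]
        exact add_le_add (card_mul_norm_sub_average_le _ _ _) (card_mul_norm_sub_average_le _ _ _)
    _ ≤ ∑ j ∈ Icc k l, variation x k l := sum_le_sum fun j hj => by
        rw [mem_Icc] at hj
        rw [norm_sub_rev (x l), ← variation_add x hj.1 hj.2]
        exact add_le_add (norm_sub_le_variation x hj.1) (norm_sub_le_variation x hj.2)
    _ = (#(Icc k l) : ℝ) * variation x k l := by rw [sum_const, nsmul_eq_mul]

end Average

section BoundaryPath

variable {E : Type*} (a b : E) (m : ℕ)

def boundaryPath (z : ℕ → E) : ℕ → E :=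
  fun i => if i = 0 then a else if i = m + 1 then b else z i

variable {a b m}

lemma boundaryPath_of_mem (z : ℕ → E) {i : ℕ} (h1 : 1 ≤ i) (h2 : i ≤ m) :
    boundaryPath a b m z i = z i := by
  simp only [boundaryPath]
  rw [if_neg (by omega), if_neg (by omega)]

lemma variation_boundaryPath_of_le [SeminormedAddCommGroup E] (z : ℕ → E) {k l : ℕ} (hk : 1 ≤ k)
    (hl : l ≤ m) :
    variation (boundaryPath a b m z) k l = variation z k l :=
  variation_congr fun _ hi hi' => boundaryPath_of_mem z (hk.trans hi) (hi'.trans hl)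

lemma variation_boundaryPath [SeminormedAddCommGroup E] (hm : 1 ≤ m) (z : ℕ → E) :
    variation (boundaryPath a b m z) 0 (m + 1)
      = ‖a - z 1‖ + ‖z m - b‖ + ∑ i ∈ Icc 1 (m - 1), ‖z i - z (i + 1)‖ := by
  have hIcc : Icc 1 (m - 1) = Ico 1 m := by ext; simp; omega
  have h0 : variation (boundaryPath a b m z) 0 1 = ‖a - z 1‖ := by
    rw [← zero_add 1, variation_succ, zero_add, boundaryPath_of_mem z le_rfl hm]
    simp [boundaryPath]
  have h1 : variation (boundaryPath a b m z) m (m + 1) = ‖z m - b‖ := by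
    rw [variation_succ, boundaryPath_of_mem z hm le_rfl]
    simp [boundaryPath]
  rw [← variation_add _ zero_le_one (by omega : 1 ≤ m + 1), ← variation_add _ hm (Nat.le_succ m),
    variation_boundaryPath_of_le z le_rfl le_rfl, h0, h1, hIcc, variation]
  ring

lemma boundaryPath_piecewise (w z : ℕ → E) {k l : ℕ} (hk : 1 ≤ k) (hl : l ≤ m) :
    boundaryPath a b m ((Icc k l).piecewise w z)
      = (Icc k l).piecewise w (boundaryPath a b m z) := by
  funext i
  simp only [boundaryPath, Finset.piecewise, mem_Icc]
  split_ifs <;> first | rfl | omega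

lemma convexOn_variation_boundaryPath [SeminormedAddCommGroup E] [NormedSpace ℝ E] (p q : ℕ) :
    ConvexOn ℝ Set.univ fun z : ℕ → E => variation (boundaryPath a b m z) p q := by
  refine ⟨convex_univ, fun u _ v _ α β hα hβ hαβ => ?_⟩
  have hpath (i : ℕ) : boundaryPath a b m (α • u + β • v) i
      = α • boundaryPath a b m u i + β • boundaryPath a b m v i := by
    simp only [boundaryPath]
    split_ifs <;> simp [← add_smul, hαβ]
  simp only [variation, smul_eq_mul, mul_sum, ← sum_add_distrib]
  refine sum_le_sum fun i _ => ?_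
  rw [hpath, hpath]
  calc _ = ‖α • (boundaryPath a b m u i - boundaryPath a b m u (i + 1))
        + β • (boundaryPath a b m v i - boundaryPath a b m v (i + 1))‖ := by
          congr 1; module
    _ ≤ _ := by
      simpa only [smul_eq_mul] using
        convexOn_univ_norm.2 (Set.mem_univ _) (Set.mem_univ _) hα hβ hαβ

end BoundaryPath

section InnerProduct

variable {F : Type*} [NormedAddCommGroup F] [InnerProductSpace ℝ F] {ι : Type*}

theorem two_mul_sum_inner_add_sub_nonneg {s : Finset ι} {y x : ι → F} {P : (ι → F) → ℝ}
    (hP : ConvexOn ℝ Set.univ P)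
    (hx : ∀ z, ∑ i ∈ s, ‖x i - y i‖ ^ 2 + P x ≤ ∑ i ∈ s, ‖z i - y i‖ ^ 2 + P z) (z : ι → F) :
    0 ≤ 2 * ∑ i ∈ s, ⟪z i - x i, x i - y i⟫ + (P z - P x) := by
  set A := 2 * ∑ i ∈ s, ⟪z i - x i, x i - y i⟫ + (P z - P x)
  set B := ∑ i ∈ s, ‖z i - x i‖ ^ 2
  have key (t : ℝ) (ht : t ∈ Set.Ioc 0 1) : 0 ≤ A + t * B := by
    obtain ⟨ht0, ht1⟩ := ht
    have hsq (i : ι) : ‖(x + t • (z - x)) i - y i‖ ^ 2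
        = ‖x i - y i‖ ^ 2 + t * (2 * ⟪z i - x i, x i - y i⟫) + t ^ 2 * ‖z i - x i‖ ^ 2 := by
      rw [show (x + t • (z - x)) i - y i = (x i - y i) + t • (z i - x i) by simp; abel,
        norm_add_sq_real, real_inner_smul_right, norm_smul, Real.norm_of_nonneg ht0.le,
        real_inner_comm]
      ring
    have hconv : P (x + t • (z - x)) ≤ (1 - t) * P x + t * P z := by
      have h := hP.2 (Set.mem_univ x) (Set.mem_univ z) (by linarith : 0 ≤ 1 - t) ht0.le
        (by ring)
      rwa [smul_eq_mul, smul_eq_mul, show (1 - t) • x + t • z = x + t • (z - x) by module] at h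
    have hmin := hx (x + t • (z - x))
    simp only [hsq, sum_add_distrib, ← mul_sum] at hmin
    have : 0 ≤ t * (A + t * B) := by nlinarith
    exact (mul_nonneg_iff_of_pos_left ht0).1 this
  have hcont : Continuous fun t : ℝ => A + t * B := by fun_prop
  have hlim : Tendsto (fun t => A + t * B) (𝓝[>] 0) (𝓝 A) :=
    (hcont.tendsto' 0 A (by rw [zero_mul, add_zero])).mono_left nhdsWithin_le_nhds
  exact ge_of_tendsto hlim (eventually_of_mem (Ioc_mem_nhdsGT zero_lt_one) key)

lemma sq_norm_sub_sq_norm_le_of_inner_nonneg {u v c : F} (h : 0 ≤ ⟪v - u, u - c⟫) :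
    ‖u‖ ^ 2 - ‖v‖ ^ 2 ≤ 2 * ‖c‖ * ‖u - v‖ := by
  have hv : ‖v‖ ^ 2 = ‖u‖ ^ 2 + 2 * ⟪u, v - u⟫ + ‖v - u‖ ^ 2 := by
    rw [← norm_add_sq_real, add_sub_cancel]
  have hc : -(‖u - v‖ * ‖c‖) ≤ ⟪v - u, c⟫ := by
    have := real_inner_le_norm (u - v) c
    rw [← neg_sub v u, inner_neg_left, norm_neg, norm_sub_rev v u] at this
    linarith
  rw [inner_sub_right, real_inner_comm] at h
  nlinarith [sq_nonneg ‖v - u‖]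

end InnerProduct

section Minimizer

variable {F : Type*} [NormedAddCommGroup F] [InnerProductSpace ℝ F]

def fusedLassoObjective (m : ℕ) (y : ℕ → F) (a b : F) (lam : ℝ) (z : ℕ → F) : ℝ :=
  ∑ i ∈ Icc 1 m, ‖z i - y i‖ ^ 2 + lam * variation (boundaryPath a b m z) 0 (m + 1)

variable {m : ℕ} {y : ℕ → F} {a b : F} {lam : ℝ} {x : ℕ → F} {k l : ℕ}

theorem window_variational_ineq (hlam : 0 ≤ lam)
    (hx : ∀ z, fusedLassoObjective m y a b lam x ≤ fusedLassoObjective m y a b lam z)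
    (hk : 1 ≤ k) (hkl : k ≤ l) (hl : l ≤ m) (w : ℕ → F) :
    0 ≤ 2 * ∑ i ∈ Icc k l, ⟪w i - x i, x i - y i⟫
      + lam * (‖w k - x k‖ + ‖w l - x l‖ + variation w k l - variation x k l) := by
  set z := (Icc k l).piecewise w x
  have hP : ConvexOn ℝ Set.univ fun z => lam * variation (boundaryPath a b m z) 0 (m + 1) := by
    simpa only [smul_eq_mul] using (convexOn_variation_boundaryPath 0 (m + 1)).smul hlam
  have h := two_mul_sum_inner_add_sub_nonneg hP hx z
  have hsum : ∑ i ∈ Icc 1 m, ⟪z i - x i, x i - y i⟫ = ∑ i ∈ Icc k l, ⟪w i - x i, x i - y i⟫ := by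
    rw [← sum_subset (Icc_subset_Icc hk hl) fun i _ hi => by simp [z, hi]]
    exact sum_congr rfl fun i hi => by simp [z, hi]
  have hvar := variation_piecewise_le (boundaryPath a b m x) w (by omega : 0 < k) hkl
    (by omega : l < m + 1)
  rw [← boundaryPath_piecewise w x hk hl, boundaryPath_of_mem x hk (hkl.trans hl),
    boundaryPath_of_mem x (hk.trans hkl) hl, variation_boundaryPath_of_le x hk hl] at hvar
  rw [hsum] at h
  nlinarith [mul_le_mul_of_nonneg_left hvar hlam]

theorem norm_sum_sub_le (hlam : 0 ≤ lam)
    (hx : ∀ z, fusedLassoObjective m y a b lam x ≤ fusedLassoObjective m y a b lam z)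
    (hk : 1 ≤ k) (hkl : k ≤ l) (hl : l ≤ m) :
    ‖∑ i ∈ Icc k l, (x i - y i)‖ ≤ lam := by
  set S := ∑ i ∈ Icc k l, (x i - y i)
  have h := window_variational_ineq hlam hx hk hkl hl fun i => x i - S
  have hV : variation (fun i => x i - S) k l = variation x k l := by
    simp only [variation, sub_sub_sub_cancel_right]
  have hS : ∑ i ∈ Icc k l, ⟪S, x i - y i⟫ = ‖S‖ ^ 2 := by
    rw [← inner_sum, real_inner_self_eq_norm_sq]
  simp only [sub_sub_cancel_left, norm_neg, hV, inner_neg_left, sum_neg_distrib, hS] at h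
  nlinarith [norm_nonneg S]

theorem inner_succ_sub_nonneg (hlam : 0 ≤ lam)
    (hx : ∀ z, fusedLassoObjective m y a b lam x ≤ fusedLassoObjective m y a b lam z)
    {t : ℕ} (ht : 1 ≤ t) (htm : t + 1 ≤ m) :
    0 ≤ ⟪x (t + 1) - x t, x t - y t⟫ := by
  have h := window_variational_ineq hlam hx ht t.le_succ htm fun _ => x (t + 1)
  simp only [sum_Icc_succ_top (Nat.le_succ t), Icc_self, sum_singleton,
    variation_succ, sub_self, norm_zero, inner_zero_left, norm_sub_rev (x (t + 1))] at h
  linarith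

theorem inner_sub_succ_nonneg (hlam : 0 ≤ lam)
    (hx : ∀ z, fusedLassoObjective m y a b lam x ≤ fusedLassoObjective m y a b lam z)
    {t : ℕ} (ht : 1 ≤ t) (htm : t + 1 ≤ m) :
    0 ≤ ⟪x t - x (t + 1), x (t + 1) - y (t + 1)⟫ := by
  have h := window_variational_ineq hlam hx ht t.le_succ htm fun _ => x t
  simp only [sum_Icc_succ_top (Nat.le_succ t), Icc_self, sum_singleton,
    variation_succ, sub_self, norm_zero, inner_zero_left] at h
  linarith

theorem abs_sq_norm_sub_sq_norm_succ_le (hlam : 0 ≤ lam)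
    (hx : ∀ z, fusedLassoObjective m y a b lam x ≤ fusedLassoObjective m y a b lam z)
    {My : ℝ} {t : ℕ} (ht : 1 ≤ t) (htm : t + 1 ≤ m) (hyt : ‖y t‖ ≤ My)
    (hyt' : ‖y (t + 1)‖ ≤ My) :
    |‖x t‖ ^ 2 - ‖x (t + 1)‖ ^ 2| ≤ 2 * My * ‖x t - x (t + 1)‖ := by
  have hdown := sq_norm_sub_sq_norm_le_of_inner_nonneg (inner_succ_sub_nonneg hlam hx ht htm)
  have hup := sq_norm_sub_sq_norm_le_of_inner_nonneg (inner_sub_succ_nonneg hlam hx ht htm)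
  rw [norm_sub_rev (x (t + 1))] at hup
  have hΔ := norm_nonneg (x t - x (t + 1))
  rw [abs_le]
  constructor <;> nlinarith

theorem sq_norm_sub_sq_norm_le_variation (hlam : 0 ≤ lam)
    (hx : ∀ z, fusedLassoObjective m y a b lam x ≤ fusedLassoObjective m y a b lam z)
    {My : ℝ} (hk : 1 ≤ k) (hl : l ≤ m) (hy : ∀ i ∈ Icc k l, ‖y i‖ ≤ My) {s t : ℕ}
    (hs : s ∈ Icc k l) (ht : t ∈ Icc k l) :
    ‖x s‖ ^ 2 - ‖x t‖ ^ 2 ≤ 2 * My * variation x k l := by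
  have tele {s t : ℕ} (hks : k ≤ s) (hst : s ≤ t) (htl : t ≤ l) :
      dist (‖x s‖ ^ 2) (‖x t‖ ^ 2) ≤ 2 * My * variation x k l := calc
    _ ≤ ∑ i ∈ Ico s t, dist (‖x i‖ ^ 2) (‖x (i + 1)‖ ^ 2) :=
      dist_le_Ico_sum_dist (fun i => ‖x i‖ ^ 2) hst
    _ ≤ ∑ i ∈ Ico k l, dist (‖x i‖ ^ 2) (‖x (i + 1)‖ ^ 2) :=
      sum_le_sum_of_subset_of_nonneg (Ico_subset_Ico hks htl) fun _ _ _ => dist_nonneg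
    _ ≤ ∑ i ∈ Ico k l, 2 * My * ‖x i - x (i + 1)‖ := sum_le_sum fun i hi => by
      rw [mem_Ico] at hi
      exact abs_sq_norm_sub_sq_norm_succ_le hlam hx (hk.trans hi.1) (by omega)
        (hy i (mem_Icc.2 ⟨hi.1, hi.2.le⟩)) (hy (i + 1) (mem_Icc.2 ⟨by omega, hi.2⟩))
    _ = 2 * My * variation x k l := by rw [variation, mul_sum]
  rw [mem_Icc] at hs ht
  rcases le_total s t with hst | hts
  · exact (le_abs_self _).trans (tele hs.1 hst ht.2)
  · exact (le_abs_self _).trans ((abs_sub_comm _ _).trans_le (tele ht.1 hts hs.2))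

theorem two_mul_sum_inner_add_le (hlam : 0 ≤ lam)
    (hx : ∀ z, fusedLassoObjective m y a b lam x ≤ fusedLassoObjective m y a b lam z)
    (hk : 1 ≤ k) (hkl : k ≤ l) (hl : l ≤ m) (c : F) :
    2 * ∑ i ∈ Icc k l, ⟪x i - c, x i - y i⟫ + lam * variation x k l
      ≤ lam * (‖x k - c‖ + ‖x l - c‖) := by
  have h := window_variational_ineq hlam hx hk hkl hl fun _ => c
  simp only [variation_const, ← neg_sub (x _) c, inner_neg_left, sum_neg_distrib, norm_neg] at h
  linarith

theorem lam_mul_variation_le (hlam : 0 ≤ lam)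
    (hx : ∀ z, fusedLassoObjective m y a b lam x ≤ fusedLassoObjective m y a b lam z)
    {My : ℝ} (hk : 1 ≤ k) (hkl : k ≤ l) (hl : l ≤ m) (hy : ∀ i ∈ Icc k l, ‖y i‖ ≤ My) :
    lam * variation x k l ≤ lam * (‖x k‖ + ‖x l‖) + #(Icc k l) * My ^ 2 / 2 := by
  have h := two_mul_sum_inner_add_le hlam hx hk hkl hl 0
  simp only [sub_zero] at h
  have hterm : ∀ i ∈ Icc k l, -(My ^ 2 / 4) ≤ ⟪x i, x i - y i⟫ := fun i hi => by
    rw [inner_sub_right, real_inner_self_eq_norm_sq]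
    nlinarith [real_inner_le_norm (x i) (y i), hy i hi, norm_nonneg (x i),
      sq_nonneg (‖x i‖ - My / 2)]
  have hsum := card_nsmul_le_sum _ _ _ hterm
  rw [nsmul_eq_mul] at hsum
  linarith

theorem exists_norm_le_add_norm_sum_div (hlam : 0 ≤ lam)
    (hx : ∀ z, fusedLassoObjective m y a b lam x ≤ fusedLassoObjective m y a b lam z)
    {My : ℝ} (hk : 1 ≤ k) (hkl : k ≤ l) (hl : l ≤ m) (hy : ∀ i ∈ Icc k l, ‖y i‖ ≤ My) :
    ∃ t ∈ Icc k l, ‖x t‖ ≤ My + ‖∑ i ∈ Icc k l, x i‖ / #(Icc k l) := by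
  set c := (#(Icc k l) : ℝ)⁻¹ • ∑ i ∈ Icc k l, x i
  have hN : (#(Icc k l) : ℝ) ≠ 0 := by simp; omega
  have hc : ∑ i ∈ Icc k l, (x i - c) = 0 := by
    rw [sum_sub_distrib, sum_const, ← Nat.cast_smul_eq_nsmul ℝ, smul_inv_smul₀ hN, sub_self]
  -- flattening the window to its mean `c` does not increase the penalty
  have hneg : ∑ i ∈ Icc k l, ⟪x i - c, x i - y i⟫ ≤ 0 := by
    have := two_mul_sum_inner_add_le hlam hx hk hkl hl c
    have := norm_sub_average_add_norm_sub_average_le_variation x hkl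
    nlinarith
  have hsplit : ∑ i ∈ Icc k l, ⟪x i - c, x i - y i⟫
      = ∑ i ∈ Icc k l, (‖x i - c‖ ^ 2 - ⟪x i - c, y i⟫) := by
    have e (i : ℕ) : ⟪x i - c, x i - y i⟫ = ‖x i - c‖ ^ 2 - ⟪x i - c, y i⟫ + ⟪x i - c, c⟫ := by
      rw [← real_inner_self_eq_norm_sq, ← inner_sub_right, ← inner_add_right]
      congr 1; abel
    rw [sum_congr rfl fun i _ => e i, sum_add_distrib, ← sum_inner, hc, inner_zero_left, add_zero]
  have hle : ∑ i ∈ Icc k l, (‖x i - c‖ ^ 2 - My * ‖x i - c‖) ≤ ∑ i ∈ Icc k l, (0 : ℝ) := by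
    refine le_trans (sum_le_sum fun i hi => ?_) ((hsplit ▸ hneg).trans sum_const_zero.ge)
    nlinarith [real_inner_le_norm (x i - c) (y i), hy i hi, norm_nonneg (x i - c)]
  obtain ⟨t, ht, hxt⟩ := exists_le_of_sum_le (nonempty_Icc.2 hkl) hle
  have hMy : 0 ≤ My := (norm_nonneg _).trans (hy t ht)
  have hxc : ‖x t - c‖ ≤ My := by nlinarith [norm_nonneg (x t - c)]
  have hcn : ‖c‖ = ‖∑ i ∈ Icc k l, x i‖ / #(Icc k l) := by
    rw [norm_smul, norm_inv, Real.norm_natCast, inv_mul_eq_div]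
  exact ⟨t, ht, by linarith [norm_le_insert' (x t) c]⟩

theorem norm_sum_le_add_norm_sum (hlam : 0 ≤ lam)
    (hx : ∀ z, fusedLassoObjective m y a b lam x ≤ fusedLassoObjective m y a b lam z)
    (hk : 1 ≤ k) (hkl : k ≤ l) (hl : l ≤ m) :
    ‖∑ i ∈ Icc k l, x i‖ ≤ lam + ‖∑ i ∈ Icc k l, y i‖ :=
  calc ‖∑ i ∈ Icc k l, x i‖ = ‖∑ i ∈ Icc k l, (x i - y i) + ∑ i ∈ Icc k l, y i‖ := by
        rw [sum_sub_distrib, sub_add_cancel]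
    _ ≤ lam + ‖∑ i ∈ Icc k l, y i‖ :=
        (norm_add_le _ _).trans (add_le_add_left (norm_sum_sub_le hlam hx hk hkl hl) _)

theorem norm_le_eleven_mul_of_window (hlam : 0 < lam)
    (hx : ∀ z, fusedLassoObjective m y a b lam x ≤ fusedLassoObjective m y a b lam z)
    {My : ℝ} {j : ℕ} (hk : 1 ≤ k) (hkj : k ≤ j) (hjl : j ≤ l) (hl : l ≤ m)
    (hy : ∀ i ∈ Icc k l, ‖y i‖ ≤ My) (hmax : ∀ i ∈ Icc k l, ‖x i‖ ≤ ‖x j‖)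
    (hlen : #(Icc k l) * My ≤ 2 * lam) (hsum : ‖∑ i ∈ Icc k l, x i‖ ≤ 7 * #(Icc k l) * My) :
    ‖x j‖ ≤ 11 * My := by
  have hkl := hkj.trans hjl
  have hN : (0 : ℝ) < #(Icc k l) := by simp; omega
  have hMy : 0 ≤ My := (norm_nonneg _).trans (hy k (left_mem_Icc.2 hkl))
  obtain ⟨t, ht, hxt⟩ := exists_norm_le_add_norm_sum_div hlam.le hx hk hkl hl hy
  have hxt8 : ‖x t‖ ≤ 8 * My := by
    have : ‖∑ i ∈ Icc k l, x i‖ / #(Icc k l) ≤ 7 * My := by rw [div_le_iff₀ hN]; linarith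
    linarith
  have hpath := sq_norm_sub_sq_norm_le_variation hlam.le hx hk hl hy (mem_Icc.2 ⟨hkj, hjl⟩) ht
  have hvar : variation x k l ≤ 2 * ‖x j‖ + My := by
    have h := lam_mul_variation_le hlam.le hx hk hkl hl hy
    have hk' := hmax k (left_mem_Icc.2 hkl)
    have hl' := hmax l (right_mem_Icc.2 hkl)
    have : #(Icc k l) * My ^ 2 / 2 ≤ lam * My := by nlinarith
    refine le_of_mul_le_mul_left ?_ hlam
    nlinarith
  nlinarith [mul_self_le_mul_self (norm_nonneg _) hxt8, norm_nonneg (x j)]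

end Minimizer

lemma exists_window {m j : ℕ} (hj : j ∈ Icc 1 m) {lam My : ℝ} (hMy : 0 < My) (hlam : My ≤ lam) :
    ∃ k l, 1 ≤ k ∧ k ≤ j ∧ j ≤ l ∧ l ≤ m ∧ (#(Icc k l) : ℝ) * My ≤ 2 * lam ∧
      (#(Icc k l) = m ∨ lam ≤ #(Icc k l) * My) := by
  rw [mem_Icc] at hj
  have hratio : 0 < lam / My := div_pos (hMy.trans_le hlam) hMy
  have hceil : 0 < ⌈lam / My⌉₊ := Nat.ceil_pos.2 hratio
  obtain ⟨k, l, hk, hkj, hjl, hl, hcard⟩ : ∃ k l, 1 ≤ k ∧ k ≤ j ∧ j ≤ l ∧ l ≤ m ∧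
      #(Icc k l) = min m ⌈lam / My⌉₊ := by
    refine ⟨min j (m + 1 - min m ⌈lam / My⌉₊), min j (m + 1 - min m ⌈lam / My⌉₊)
      + min m ⌈lam / My⌉₊ - 1, ?_⟩
    simp only [Nat.card_Icc]
    omega
  refine ⟨k, l, hk, hkj, hjl, hl, ?_, ?_⟩ <;> rw [hcard]
  · calc ((min m ⌈lam / My⌉₊ : ℕ) : ℝ) * My ≤ ⌈lam / My⌉₊ * My := by
          gcongr; exact_mod_cast min_le_right _ _
      _ ≤ (lam / My + 1) * My := by gcongr; exact (Nat.ceil_lt_add_one hratio.le).le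
      _ ≤ 2 * lam := by rw [add_mul, div_mul_cancel₀ _ hMy.ne']; linarith
  · rcases min_choice m ⌈lam / My⌉₊ with h | h
    · exact .inl h
    · right
      rw [h, ← div_le_iff₀ hMy]
      exact Nat.le_ceil _

end FusedLasso

open Finset FusedLasso

theorem group_fused_lasso_uniform_norm_bound_general
    (p m : ℕ) (hm : 1 ≤ m)
    (y : ℕ → EuclideanSpace ℝ (Fin p)) (a b : EuclideanSpace ℝ (Fin p))
    (lam My : ℝ) (hlam : 0 < lam) (hMy : 0 < My)
    (hy : ∀ k l : ℕ, 1 ≤ k → k ≤ l → l ≤ m →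
      ‖∑ i ∈ Finset.Icc k l, y i‖ ≤ My * Real.sqrt (l - k + 1))
    (hlam₂ : lam < (7 * m - Real.sqrt m) * My)
    (G : (ℕ → EuclideanSpace ℝ (Fin p)) → ℝ)
    (hG : ∀ z : ℕ → EuclideanSpace ℝ (Fin p), G z =
      ∑ i ∈ Finset.Icc 1 m, ‖z i - y i‖ ^ 2
        + lam * (‖a - z 1‖ + ‖z m - b‖ + ∑ i ∈ Finset.Icc 1 (m - 1), ‖z i - z (i + 1)‖))
    (xh : ℕ → EuclideanSpace ℝ (Fin p))
    (hmin : ∀ z : ℕ → EuclideanSpace ℝ (Fin p), G xh ≤ G z) :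
    ∀ i : ℕ, 1 ≤ i → i ≤ m → ‖xh i‖ ≤ 25 * My := by
  have hx (z : ℕ → EuclideanSpace ℝ (Fin p)) :
      fusedLassoObjective m y a b lam xh ≤ fusedLassoObjective m y a b lam z := by
    simpa only [fusedLassoObjective, variation_boundaryPath hm, ← hG] using hmin z
  have hyb (i : ℕ) (hi : i ∈ Icc 1 m) : ‖y i‖ ≤ My := by
    simpa using hy i i (mem_Icc.1 hi).1 le_rfl (mem_Icc.1 hi).2
  obtain ⟨j, hj, hjmax⟩ := exists_max_image (Icc 1 m) (fun i => ‖xh i‖) (nonempty_Icc.2 hm)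
  intro i hi him
  refine (hjmax i (mem_Icc.2 ⟨hi, him⟩)).trans ?_
  rcases lt_or_ge lam My with hsmall | hbig
  · have := norm_sum_sub_le hlam.le hx (mem_Icc.1 hj).1 le_rfl (mem_Icc.1 hj).2
    rw [Icc_self, sum_singleton] at this
    linarith [norm_le_insert' (xh j) (y j), hyb j hj]
  obtain ⟨k, l, hk, hkj, hjl, hl, hlen, hlong⟩ := exists_window hj hMy hbig
  have hkl := hkj.trans hjl
  have hN : (#(Icc k l) : ℝ) = l - k + 1 := by
    rw [Nat.card_Icc, Nat.cast_sub (by omega)]; push_cast; ring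
  have hsum := norm_sum_le_add_norm_sum hlam.le hx hk hkl hl
  have hdata := hy k l hk hkl hl
  rw [← hN] at hdata
  refine (norm_le_eleven_mul_of_window hlam hx hk hkj hjl hl
    (fun i hi => hyb i (Icc_subset_Icc hk hl hi)) (fun i hi => hjmax i (Icc_subset_Icc hk hl hi))
    hlen ?_).trans (by linarith)
  rcases hlong with hm' | hlong
  · rw [hm'] at hdata ⊢
    linarith
  · have : √(#(Icc k l) : ℝ) ≤ #(Icc k l) := Real.sqrt_le_self_iff.2 (.inr (by simp; omega))
    nlinarith

/-- Lemma 4.4: uniform norm bound `max_i ‖x̂_i‖ ≤ 25 M_y` for the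
one-interval group fused lasso minimizer when `λ < (7m - √m) M_y`. -/
theorem group_fused_lasso_uniform_norm_bound
    (p m : ℕ) (hp : 1 ≤ p) (hm : 1 ≤ m)
    (y : ℕ → EuclideanSpace ℝ (Fin p)) (a b : EuclideanSpace ℝ (Fin p))
    (lam My : ℝ) (hlam : 0 < lam) (hMy : 0 < My)
    (hy : ∀ k l : ℕ, 1 ≤ k → k ≤ l → l ≤ m →
      ‖∑ i ∈ Finset.Icc k l, y i‖ ≤ My * Real.sqrt (l - k + 1))
    (hlam₂ : lam < (7 * m - Real.sqrt m) * My)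
    (G : (ℕ → EuclideanSpace ℝ (Fin p)) → ℝ)
    (hG : ∀ z : ℕ → EuclideanSpace ℝ (Fin p), G z =
      ∑ i ∈ Finset.Icc 1 m, ‖z i - y i‖ ^ 2
        + lam * (‖a - z 1‖ + ‖z m - b‖ + ∑ i ∈ Finset.Icc 1 (m - 1), ‖z i - z (i + 1)‖))
    (xh : ℕ → EuclideanSpace ℝ (Fin p))
    (hmin : ∀ z : ℕ → EuclideanSpace ℝ (Fin p), G xh ≤ G z) :
    ∀ i : ℕ, 1 ≤ i → i ≤ m → ‖xh i‖ ≤ 25 * My :=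
  group_fused_lasso_uniform_norm_bound_general p m hm y a b lam My hlam hMy hy hlam₂ G hG xh hmin
end

section
/- In the setting of the one-interval group fused lasso (y_i ∈ ℝ^p satisfying ‖∑_{i=k}^{l} y_i‖ ≤ M_y·√(l−k+1) for all 1 ≤ k ≤ l ≤ m, x̂ the minimizer of G with x̂_0 = a, x̂_{m+1} = b, 25²·M_y ≤ λ < (7m − √m)·M_y, and max_i ‖x̂_i‖ ≤ M_d where M_d = 25·M_y): if x̂_l ≠ x̂_{l+1} and u_l^T x̂_l ≤ −√(M_d·M_y²/λ), then l ≤ l_0 + 1, where l_0 = ⌊M_y²/(u_l^T x̂_l)²⌋ and u_l = (x̂_{l+1} − x̂_l)/‖x̂_{l+1} − x̂_l‖. Symmetrically, if x̂_l ≠ x̂_{l−1} and u_{l−1}^T x̂_l > √(M_d·M_y²/λ), then m − l ≤ l_1 + 1 with l_1 = ⌊M_y²/(u_{l−1}^T x̂_l)²⌋. -/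
/-!
Shifting a block `x̂ k, …, x̂ r` of the minimizer by `ε c` changes the objective by
`ε (2 ∑_{i=k}^r ⟪x̂ i - y i, c⟫ + λ · (rate of change of the two boundary jumps)) + O(ε²)`,
which is nonnegative. Take `c = u := u_l` and blocks `[k, l]`: the jump at `l` then shrinks at
unit rate, so `S k := ∑_{i=k}^l ⟪x̂ i - y i, u⟫ ≥ 0`, and if `S (k + 1) ≤ λ / 2` the jump at `k`
cannot point against `u`, i.e. `⟪x̂ k, u⟫ ≤ ⟪x̂ (k + 1), u⟫`.
By downward induction `⟪x̂ i, u⟫ ≤ t := ⟪x̂ l, u⟫ < 0` for all `i ≤ l`: if it holds on `(k, l]`,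
the partial-sum bound on `y` and AM-GM give
`S (k + 1) ≤ (l - k) t + M_y √(l - k) ≤ M_y² / (4 |t|) ≤ λ / 2`, the last step being the threshold
on `t`. Finally `0 ≤ S 1 ≤ l t + M_y √l`, so `l t² ≤ M_y²`.
The second claim is the first one for the reversed sequence `i ↦ m + 1 - i`.
-/

open Finset Filter Topology
open scoped RealInnerProductSpace

lemma nonneg_of_forall_nonneg_add_mul {A B ε₀ : ℝ} (hε₀ : 0 < ε₀)
    (h : ∀ ε, 0 < ε → ε ≤ ε₀ → 0 ≤ A + ε * B) : 0 ≤ A := by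
  have hlim : Tendsto (fun ε => A + ε * B) (𝓝[>] 0) (𝓝 A) := by
    have : Tendsto (fun ε : ℝ => A + ε * B) (𝓝 0) (𝓝 (A + 0 * B)) :=
      (continuous_const.add (continuous_id.mul continuous_const)).tendsto 0
    simpa using this.mono_left nhdsWithin_le_nhds
  exact ge_of_tendsto hlim (eventually_of_mem (Ioc_mem_nhdsGT hε₀) fun ε hε => h ε hε.1 hε.2)

lemma two_mul_add_mul_sqrt_le {lam My s n : ℝ} (hs : 0 < s) (hn : 0 ≤ n)
    (h : My ^ 2 ≤ 2 * lam * s) : 2 * (n * -s + My * √n) ≤ lam := by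
  have hsq : s ^ 2 * √n ^ 2 = s ^ 2 * n := by rw [Real.sq_sqrt hn]
  refine le_of_mul_le_mul_left ?_ (by positivity : 0 < 2 * s)
  nlinarith [sq_nonneg (2 * s * √n - My)]

lemma le_floor_div_sq_of_mul_le_sqrt {n : ℕ} {t My : ℝ} (hn : 0 < n) (ht : t ≠ 0)
    (h : n * |t| ≤ My * √n) : n ≤ ⌊My ^ 2 / t ^ 2⌋₊ := by
  have hn' : (0 : ℝ) < n := by exact_mod_cast hn
  refine Nat.le_floor ((le_div_iff₀ (by positivity)).mpr ?_)
  have h2 := pow_le_pow_left₀ (by positivity) h 2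
  rw [mul_pow, mul_pow, Real.sq_sqrt hn'.le, sq_abs] at h2
  nlinarith

lemma sq_le_two_mul_mul_of_sqrt_le {My lam t : ℝ} (hMy : 0 < My) (hlam : 25 ^ 2 * My ≤ lam)
    (ht : √(25 * My * My ^ 2 / lam) ≤ t) : My ^ 2 ≤ 2 * lam * t := by
  have hlam0 : 0 < lam := lt_of_lt_of_le (by positivity) hlam
  obtain ⟨ht0, ht2⟩ := Real.sqrt_le_iff.mp ht
  rw [div_le_iff₀' hlam0] at ht2
  nlinarith [mul_le_mul_of_nonneg_left ht2 hlam0.le,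
    mul_le_mul_of_nonneg_right hlam (pow_pos hMy 3).le, mul_nonneg hlam0.le ht0]

lemma sum_Icc_reflect {M : Type*} [AddCommMonoid M] (f : ℕ → M) {n k r : ℕ} (hk : k ≤ n)
    (hr : r ≤ n) : ∑ i ∈ Icc k r, f (n - i) = ∑ i ∈ Icc (n - r) (n - k), f i := by
  refine sum_nbij' (n - ·) (n - ·) ?_ ?_ ?_ ?_ fun _ _ => rfl <;>
    intro i hi <;> simp only [mem_Icc] at hi ⊢ <;> omega

lemma cast_card_Icc {k l : ℕ} (h : k ≤ l + 1) : ((Icc k l).card : ℝ) = l - k + 1 := by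
  rw [Nat.card_Icc, Nat.cast_sub h]
  push_cast
  ring

variable {E : Type*} [NormedAddCommGroup E]

def PartialSumsBounded (m : ℕ) (My : ℝ) (y : ℕ → E) : Prop :=
  ∀ k l : ℕ, 1 ≤ k → k ≤ l → l ≤ m → ‖∑ i ∈ Icc k l, y i‖ ≤ My * √(l - k + 1)

lemma PartialSumsBounded.reflect {m : ℕ} {My : ℝ} {y : ℕ → E} (hy : PartialSumsBounded m My y) :
    PartialSumsBounded m My (fun i => y (m + 1 - i)) := by
  intro k l hk hkl hlm
  rw [sum_Icc_reflect y (by omega) (by omega)]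
  convert hy (m + 1 - l) (m + 1 - k) (by omega) (by omega) (by omega) using 3
  rw [Nat.cast_sub (by omega), Nat.cast_sub (by omega)]
  ring

lemma sum_range_norm_sub_eq {m : ℕ} (hm : 1 ≤ m) (z : ℕ → E) :
    ∑ i ∈ range (m + 1), ‖z (i + 1) - z i‖
      = ‖z 0 - z 1‖ + ‖z m - z (m + 1)‖ + ∑ i ∈ Icc 1 (m - 1), ‖z i - z (i + 1)‖ := by
  obtain ⟨n, rfl⟩ := Nat.exists_eq_add_of_le' hm
  rw [sum_range_succ, sum_range_succ', Nat.add_sub_cancel, ← Ico_add_one_right_eq_Icc,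
    sum_Ico_eq_sum_range, Nat.add_sub_cancel]
  simp only [zero_add, add_comm 1]
  rw [norm_sub_rev (z 0), norm_sub_rev (z (n + 1)),
    sum_congr rfl fun i _ => norm_sub_rev (z (i + 1)) (z (i + 1 + 1))]
  ring

lemma sum_range_norm_sub_add_ite {m k r : ℕ} (hk : 1 ≤ k) (hkr : k ≤ r) (hrm : r ≤ m)
    (x : ℕ → E) (c : E) :
    ∑ i ∈ range (m + 1), ‖x (i + 1) + (if i + 1 ∈ Icc k r then c else 0)
        - (x i + if i ∈ Icc k r then c else 0)‖
      = ∑ i ∈ range (m + 1), ‖x (i + 1) - x i‖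
        + (‖x k - x (k - 1) + c‖ - ‖x k - x (k - 1)‖)
        + (‖x (r + 1) - x r - c‖ - ‖x (r + 1) - x r‖) := by
  rw [add_assoc, ← sub_eq_iff_eq_add', ← sum_sub_distrib,
    sum_eq_add_of_mem (k - 1) r (mem_range.mpr (by omega)) (mem_range.mpr (by omega)) (by omega)]
  · have h1 : k - 1 + 1 = k := by omega
    have h2 : ¬ k ≤ k - 1 := by omega
    simp [h1, h2, hkr, add_sub_right_comm, sub_add_eq_sub_sub]
  · rintro i - ⟨hik, hir⟩
    have hiff : i + 1 ∈ Icc k r ↔ i ∈ Icc k r := by simp only [mem_Icc]; omega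
    simp only [hiff]
    split_ifs <;> simp

variable [InnerProductSpace ℝ E]

-- `x 0` and `x (m + 1)` play the roles of the boundary values `a` and `b`.
noncomputable def fusedLassoObjective (m : ℕ) (lam : ℝ) (y x : ℕ → E) : ℝ :=
  ∑ i ∈ Icc 1 m, ‖x i - y i‖ ^ 2 + lam * ∑ i ∈ range (m + 1), ‖x (i + 1) - x i‖

-- The right-hand side is the increase of `fusedLassoObjective m lam y` when `c` is added to
-- `x k, …, x r`.
def IsBlockShiftMin (m : ℕ) (lam : ℝ) (y x : ℕ → E) : Prop :=
  ∀ k r, 1 ≤ k → k ≤ r → r ≤ m → ∀ c : E,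
    0 ≤ ∑ i ∈ Icc k r, (2 * ⟪x i - y i, c⟫ + ‖c‖ ^ 2)
      + lam * (‖x k - x (k - 1) + c‖ - ‖x k - x (k - 1)‖)
      + lam * (‖x (r + 1) - x r - c‖ - ‖x (r + 1) - x r‖)

lemma sum_norm_sub_sq_add_ite {m k r : ℕ} (hk : 1 ≤ k) (hrm : r ≤ m) (x y : ℕ → E) (c : E) :
    ∑ i ∈ Icc 1 m, ‖x i + (if i ∈ Icc k r then c else 0) - y i‖ ^ 2
      = ∑ i ∈ Icc 1 m, ‖x i - y i‖ ^ 2 + ∑ i ∈ Icc k r, (2 * ⟪x i - y i, c⟫ + ‖c‖ ^ 2) := by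
  have hblock : ∑ i ∈ Icc k r, (2 * ⟪x i - y i, c⟫ + ‖c‖ ^ 2)
      = ∑ i ∈ Icc 1 m, if i ∈ Icc k r then 2 * ⟪x i - y i, c⟫ + ‖c‖ ^ 2 else 0 := by
    rw [sum_ite_mem, inter_eq_right.mpr (Icc_subset_Icc hk hrm)]
  rw [hblock, ← sum_add_distrib]
  refine sum_congr rfl fun i _ => ?_
  split_ifs <;> simp [add_sub_right_comm, norm_add_sq_real, add_assoc]

lemma isBlockShiftMin_of_le {m : ℕ} {lam : ℝ} {y x : ℕ → E}
    (h : ∀ z : ℕ → E, z 0 = x 0 → z (m + 1) = x (m + 1) →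
      fusedLassoObjective m lam y x ≤ fusedLassoObjective m lam y z) :
    IsBlockShiftMin m lam y x := by
  intro k r hk hkr hrm c
  have := h (fun i => x i + if i ∈ Icc k r then c else 0)
    (by simp only [mem_Icc]; rw [if_neg (by omega), add_zero])
    (by simp only [mem_Icc]; rw [if_neg (by omega), add_zero])
  rw [fusedLassoObjective, fusedLassoObjective, sum_norm_sub_sq_add_ite hk hrm,
    sum_range_norm_sub_add_ite hk hkr hrm] at this
  linarith

lemma IsBlockShiftMin.reflect {m : ℕ} {lam : ℝ} {y x : ℕ → E} (hx : IsBlockShiftMin m lam y x) :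
    IsBlockShiftMin m lam (fun i => y (m + 1 - i)) (fun i => x (m + 1 - i)) := by
  intro k r hk hkr hrm c
  have h := hx (m + 1 - r) (m + 1 - k) (by omega) (by omega) (by omega) c
  rw [← sum_Icc_reflect (fun i => 2 * ⟪x i - y i, c⟫ + ‖c‖ ^ 2) (by omega) (by omega),
    show m + 1 - k + 1 = m + 1 - (k - 1) by omega, show m + 1 - r - 1 = m + 1 - (r + 1) by omega]
    at h
  have hneg : ∀ a b : E, ‖a - b - c‖ = ‖b - a + c‖ := fun a b => by
    rw [← norm_neg]; congr 1; abel
  simp only [hneg, norm_sub_rev (x (m + 1 - (k - 1)))] at h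
  simp only [hneg, norm_sub_rev (x (m + 1 - (r + 1)))]
  linarith

lemma norm_eq_one_and_eq_norm_smul {d u : E} (hd : d ≠ 0) (hu : u = ‖d‖⁻¹ • d) :
    ‖u‖ = 1 ∧ d = ‖d‖ • u := by
  subst hu
  exact ⟨norm_smul_inv_norm hd, (smul_inv_smul₀ (norm_ne_zero_iff.mpr hd) d).symm⟩

lemma norm_add_sub_norm_le {d : E} (hd : d ≠ 0) (c : E) :
    ‖d + c‖ - ‖d‖ ≤ (2 * ⟪d, c⟫ + ‖c‖ ^ 2) / (2 * ‖d‖) := by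
  have hd0 : 0 < ‖d‖ := norm_pos_iff.mpr hd
  rw [le_div_iff₀ (by positivity)]
  nlinarith [norm_add_sq_real d c, sq_nonneg (‖d + c‖ - ‖d‖)]

lemma sum_inner_sub_le {x y : ℕ → E} {u : E} {k l : ℕ} {t B : ℝ} (hu : ‖u‖ = 1)
    (hkl : k ≤ l + 1) (hx : ∀ i ∈ Icc k l, ⟪x i, u⟫ ≤ t) (hy : ‖∑ i ∈ Icc k l, y i‖ ≤ B) :
    ∑ i ∈ Icc k l, ⟪x i - y i, u⟫ ≤ (l - k + 1 : ℝ) * t + B := by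
  have hxsum : ∑ i ∈ Icc k l, ⟪x i, u⟫ ≤ (l - k + 1 : ℝ) * t := by
    have := sum_le_card_nsmul (Icc k l) (fun i => ⟪x i, u⟫) t hx
    rwa [nsmul_eq_mul, cast_card_Icc hkl] at this
  have hysum : -⟪∑ i ∈ Icc k l, y i, u⟫ ≤ B :=
    calc _ ≤ |⟪∑ i ∈ Icc k l, y i, u⟫| := neg_le_abs _
      _ ≤ ‖∑ i ∈ Icc k l, y i‖ * ‖u‖ := abs_real_inner_le_norm _ _
      _ ≤ B := by rwa [hu, mul_one]
  rw [sum_inner] at hysum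
  simp only [inner_sub_left, sum_sub_distrib]
  linarith

namespace IsBlockShiftMin

variable {m k l : ℕ} {lam My g : ℝ} {y x : ℕ → E} {u : E}

-- `δ` bounds the rate of change of the left boundary jump; the jump at `l` shrinks at unit rate.
lemma lam_mul_one_sub_le {δ C ε₀ : ℝ} (hx : IsBlockShiftMin m lam y x) (hlam : 0 ≤ lam)
    (hk : 1 ≤ k) (hkl : k ≤ l) (hlm : l ≤ m) (hu : ‖u‖ = 1) (hg : 0 < g)
    (hjump : x (l + 1) - x l = g • u) (hε₀ : 0 < ε₀)
    (hleft : ∀ ε, 0 < ε → ε ≤ ε₀ →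
      ‖x k - x (k - 1) + ε • u‖ - ‖x k - x (k - 1)‖ ≤ ε * δ + ε ^ 2 * C) :
    lam * (1 - δ) ≤ 2 * ∑ i ∈ Icc k l, ⟪x i - y i, u⟫ := by
  rw [← sub_nonneg]
  refine nonneg_of_forall_nonneg_add_mul (B := (l - k + 1 : ℝ) + lam * C) (lt_min hε₀ hg)
    fun ε hε hεmin => (mul_nonneg_iff_of_pos_left hε).mp ?_
  have hblock := hx k l hk hkl hlm (ε • u)
  have hsum : ∑ i ∈ Icc k l, (2 * ⟪x i - y i, ε • u⟫ + ‖ε • u‖ ^ 2)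
      = ε * (2 * ∑ i ∈ Icc k l, ⟪x i - y i, u⟫) + (l - k + 1 : ℝ) * ε ^ 2 := by
    rw [sum_add_distrib, sum_const, nsmul_eq_mul, cast_card_Icc (by omega), mul_sum, mul_sum]
    simp only [inner_smul_right, norm_smul, hu, mul_one, Real.norm_eq_abs, sq_abs, mul_left_comm]
  have hright : ‖x (l + 1) - x l - ε • u‖ - ‖x (l + 1) - x l‖ = -ε := by
    rw [hjump, ← sub_smul, norm_smul, norm_smul, hu, Real.norm_of_nonneg hg.le,
      Real.norm_of_nonneg (by linarith [min_le_right ε₀ g])]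
    ring
  have hl := mul_le_mul_of_nonneg_left (hleft ε hε (hεmin.trans (min_le_left _ _))) hlam
  rw [hsum, hright] at hblock
  nlinarith

lemma sum_inner_nonneg (hx : IsBlockShiftMin m lam y x) (hlam : 0 ≤ lam) (hk : 1 ≤ k)
    (hkl : k ≤ l) (hlm : l ≤ m) (hu : ‖u‖ = 1) (hg : 0 < g) (hjump : x (l + 1) - x l = g • u) :
    0 ≤ ∑ i ∈ Icc k l, ⟪x i - y i, u⟫ := by
  have := hx.lam_mul_one_sub_le hlam hk hkl hlm hu hg hjump one_pos (δ := 1) (C := 0)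
    fun ε hε _ => by
      have := norm_add_le (x k - x (k - 1)) (ε • u)
      rw [norm_smul, hu, mul_one, Real.norm_of_nonneg hε.le] at this
      linarith
  linarith

lemma inner_sub_nonneg (hx : IsBlockShiftMin m lam y x) (hlam : 0 < lam) (hkl : k < l)
    (hlm : l ≤ m) (hu : ‖u‖ = 1) (hg : 0 < g) (hjump : x (l + 1) - x l = g • u)
    (hS : 2 * ∑ i ∈ Icc (k + 1) l, ⟪x i - y i, u⟫ ≤ lam) : 0 ≤ ⟪x (k + 1) - x k, u⟫ := by
  set d := x (k + 1) - x k
  rcases eq_or_ne d 0 with hd | hd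
  · simp [hd]
  have hd0 : 0 < ‖d‖ := norm_pos_iff.mpr hd
  have := hx.lam_mul_one_sub_le hlam.le (k := k + 1) (by omega) hkl hlm hu hg hjump one_pos
    (δ := ⟪d, u⟫ / ‖d‖) (C := 1 / (2 * ‖d‖)) fun ε _ _ => by
      rw [Nat.add_sub_cancel]
      calc _ ≤ (2 * ⟪d, ε • u⟫ + ‖ε • u‖ ^ 2) / (2 * ‖d‖) := norm_add_sub_norm_le hd _
        _ = _ := by
          rw [inner_smul_right, norm_smul, hu, mul_one, Real.norm_eq_abs, sq_abs]
          field_simp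
  have hδ : 0 ≤ ⟪d, u⟫ / ‖d‖ := by nlinarith
  simpa [hd0.ne'] using mul_nonneg hδ hd0.le

lemma inner_le_inner_of_le (hx : IsBlockShiftMin m lam y x) (hy : PartialSumsBounded m My y)
    (hlam : 0 < lam) (hlm : l ≤ m) (hu : ‖u‖ = 1) (hg : 0 < g)
    (hjump : x (l + 1) - x l = g • u) (ht : ⟪x l, u⟫ < 0)
    (hthr : My ^ 2 ≤ 2 * lam * -⟪x l, u⟫) (hkl : k ≤ l) :
    ⟪x k, u⟫ ≤ ⟪x l, u⟫ := by
  suffices ∀ i ∈ Icc k l, ⟪x i, u⟫ ≤ ⟪x l, u⟫ from this k (by simp [hkl])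
  induction hkl using Nat.decreasingInduction with
  | self => simp
  | of_succ k hkl ih =>
    have hS := sum_inner_sub_le hu (by omega) ih (hy (k + 1) l (by omega) hkl hlm)
    have hn : (0 : ℝ) ≤ l - (k + 1 : ℕ) + 1 := by
      have : ((k + 1 : ℕ) : ℝ) ≤ l := by exact_mod_cast hkl
      linarith
    have hstep := hx.inner_sub_nonneg hlam hkl hlm hu hg hjump
      (by linarith [two_mul_add_mul_sqrt_le (neg_pos.mpr ht) hn hthr])
    rw [inner_sub_left] at hstep
    intro i hi
    rcases (mem_Icc.mp hi).1.eq_or_lt with rfl | hki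
    · linarith [ih (k + 1) (mem_Icc.mpr ⟨le_rfl, hkl⟩)]
    · exact ih i (mem_Icc.mpr ⟨hki, (mem_Icc.mp hi).2⟩)

theorem le_floor_div_inner_sq (hx : IsBlockShiftMin m lam y x) (hy : PartialSumsBounded m My y)
    (hlam : 0 < lam) (hl : 1 ≤ l) (hlm : l ≤ m) (hu : ‖u‖ = 1) (hg : 0 < g)
    (hjump : x (l + 1) - x l = g • u) (ht : ⟪u, x l⟫ < 0)
    (hthr : My ^ 2 ≤ 2 * lam * -⟪u, x l⟫) : l ≤ ⌊My ^ 2 / ⟪u, x l⟫ ^ 2⌋₊ := by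
  rw [real_inner_comm] at ht hthr ⊢
  have hS := hx.sum_inner_nonneg hlam.le le_rfl hl hlm hu hg hjump
  have hle := sum_inner_sub_le hu (by omega)
    (fun i hi => hx.inner_le_inner_of_le hy hlam hlm hu hg hjump ht hthr (mem_Icc.mp hi).2)
    (hy 1 l le_rfl hl hlm)
  refine le_floor_div_sq_of_mul_le_sqrt (by omega) ht.ne ?_
  rw [abs_of_neg ht]
  push_cast at hle
  simp only [sub_add_cancel] at hle
  linarith

theorem sub_le_floor_div_inner_sq (hx : IsBlockShiftMin m lam y x)
    (hy : PartialSumsBounded m My y) (hlam : 0 < lam) (hl : 1 ≤ l) (hlm : l ≤ m) (hu : ‖u‖ = 1)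
    (hg : 0 < g) (hjump : x l - x (l - 1) = g • u) (ht : 0 < ⟪u, x l⟫)
    (hthr : My ^ 2 ≤ 2 * lam * ⟪u, x l⟫) : m + 1 - l ≤ ⌊My ^ 2 / ⟪u, x l⟫ ^ 2⌋₊ := by
  have hl' : m + 1 - (m + 1 - l) = l := by omega
  have hl'' : m + 1 - (m + 1 - l + 1) = l - 1 := by omega
  have key := hx.reflect.le_floor_div_inner_sq hy.reflect hlam (l := m + 1 - l) (u := -u)
    (by omega) (by omega) (by rwa [norm_neg]) hg
    (by simp only [hl', hl'']; rw [smul_neg, ← hjump, neg_sub])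
    (by simp only [hl', inner_neg_left]; linarith)
    (by simpa only [hl', inner_neg_left, neg_neg] using hthr)
  simpa only [hl', inner_neg_left, neg_sq] using key

end IsBlockShiftMin

theorem group_fused_lasso_order_lemma_general
    (p m : ℕ)
    (y : ℕ → EuclideanSpace ℝ (Fin p)) (a b : EuclideanSpace ℝ (Fin p))
    (lam My : ℝ) (hMy : 0 < My)
    (hy : ∀ k l : ℕ, 1 ≤ k → k ≤ l → l ≤ m →
      ‖∑ i ∈ Finset.Icc k l, y i‖ ≤ My * Real.sqrt (l - k + 1))
    (hlam₁ : 25 ^ 2 * My ≤ lam)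
    (G : (ℕ → EuclideanSpace ℝ (Fin p)) → ℝ)
    (hG : ∀ z : ℕ → EuclideanSpace ℝ (Fin p), G z =
      ∑ i ∈ Finset.Icc 1 m, ‖z i - y i‖ ^ 2
        + lam * (‖a - z 1‖ + ‖z m - b‖ + ∑ i ∈ Finset.Icc 1 (m - 1), ‖z i - z (i + 1)‖))
    (xh : ℕ → EuclideanSpace ℝ (Fin p))
    (hmin : ∀ z : ℕ → EuclideanSpace ℝ (Fin p), G xh ≤ G z)
    (ha : xh 0 = a) (hb : xh (m + 1) = b)
    (Md : ℝ) (hMd : Md = 25 * My)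
    (u : ℕ → EuclideanSpace ℝ (Fin p))
    (hu : ∀ i : ℕ, xh i ≠ xh (i + 1) → u i = ‖xh (i + 1) - xh i‖⁻¹ • (xh (i + 1) - xh i))
    (l : ℕ) (hl1 : 1 ≤ l) (hlm : l ≤ m) :
    (xh l ≠ xh (l + 1) → ⟪u l, xh l⟫ ≤ -Real.sqrt (Md * My ^ 2 / lam) →
      l ≤ ⌊My ^ 2 / ⟪u l, xh l⟫ ^ 2⌋₊ + 1) ∧
    (xh l ≠ xh (l - 1) → Real.sqrt (Md * My ^ 2 / lam) < ⟪u (l - 1), xh l⟫ →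
      m - l ≤ ⌊My ^ 2 / ⟪u (l - 1), xh l⟫ ^ 2⌋₊ + 1) := by
  subst hMd
  have hlam : 0 < lam := lt_of_lt_of_le (by positivity) hlam₁
  have hobj : ∀ z, z 0 = a → z (m + 1) = b → G z = fusedLassoObjective m lam y z := by
    rintro z rfl rfl
    rw [hG, fusedLassoObjective, sum_range_norm_sub_eq (hl1.trans hlm)]
  have hx : IsBlockShiftMin m lam y xh := isBlockShiftMin_of_le fun z hz0 hzm => by
    rw [← hobj xh ha hb, ← hobj z (hz0.trans ha) (hzm.trans hb)]
    exact hmin z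
  have hsqrt : 0 < √(25 * My * My ^ 2 / lam) := Real.sqrt_pos.mpr (by positivity)
  constructor
  · intro hne ht
    have hd := sub_ne_zero.mpr hne.symm
    obtain ⟨hun, hjump⟩ := norm_eq_one_and_eq_norm_smul hd (hu l hne)
    exact (hx.le_floor_div_inner_sq hy hlam hl1 hlm hun (norm_pos_iff.mpr hd) hjump
      (by linarith) (sq_le_two_mul_mul_of_sqrt_le hMy hlam₁ (le_neg.mpr ht))).trans le_self_add
  · intro hne ht
    have hd := sub_ne_zero.mpr hne
    have hl : l - 1 + 1 = l := Nat.sub_add_cancel hl1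
    obtain ⟨hun, hjump⟩ := norm_eq_one_and_eq_norm_smul hd (hl ▸ hu (l - 1) (by rwa [hl, ne_comm]))
    have := hx.sub_le_floor_div_inner_sq hy hlam hl1 hlm hun (norm_pos_iff.mpr hd) hjump
      (hsqrt.trans ht) (sq_le_two_mul_mul_of_sqrt_le hMy hlam₁ ht.le)
    omega

/-- Lemma 4.5: location bounds for indices of the one-interval group fused
lasso solution with strongly negative (resp. positive) derivative direction. -/
theorem group_fused_lasso_order_lemma
    (p m : ℕ) (hp : 1 ≤ p) (hm : 1 ≤ m)
    (y : ℕ → EuclideanSpace ℝ (Fin p)) (a b : EuclideanSpace ℝ (Fin p))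
    (lam My : ℝ) (hMy : 0 < My)
    (hy : ∀ k l : ℕ, 1 ≤ k → k ≤ l → l ≤ m →
      ‖∑ i ∈ Finset.Icc k l, y i‖ ≤ My * Real.sqrt (l - k + 1))
    (hlam₁ : 25 ^ 2 * My ≤ lam)
    (hlam₂ : lam < (7 * m - Real.sqrt m) * My)
    (G : (ℕ → EuclideanSpace ℝ (Fin p)) → ℝ)
    (hG : ∀ z : ℕ → EuclideanSpace ℝ (Fin p), G z =
      ∑ i ∈ Finset.Icc 1 m, ‖z i - y i‖ ^ 2
        + lam * (‖a - z 1‖ + ‖z m - b‖ + ∑ i ∈ Finset.Icc 1 (m - 1), ‖z i - z (i + 1)‖))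
    (xh : ℕ → EuclideanSpace ℝ (Fin p))
    (hmin : ∀ z : ℕ → EuclideanSpace ℝ (Fin p), G xh ≤ G z)
    (ha : xh 0 = a) (hb : xh (m + 1) = b)
    (Md : ℝ) (hMd : Md = 25 * My)
    (hbound : ∀ i : ℕ, 1 ≤ i → i ≤ m → ‖xh i‖ ≤ Md)
    (u : ℕ → EuclideanSpace ℝ (Fin p))
    (hu : ∀ i : ℕ, xh i ≠ xh (i + 1) → u i = ‖xh (i + 1) - xh i‖⁻¹ • (xh (i + 1) - xh i))
    (l : ℕ) (hl1 : 1 ≤ l) (hlm : l ≤ m) :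
    (xh l ≠ xh (l + 1) → ⟪u l, xh l⟫ ≤ -Real.sqrt (Md * My ^ 2 / lam) →
      l ≤ ⌊My ^ 2 / ⟪u l, xh l⟫ ^ 2⌋₊ + 1) ∧
    (xh l ≠ xh (l - 1) → Real.sqrt (Md * My ^ 2 / lam) < ⟪u (l - 1), xh l⟫ →
      m - l ≤ ⌊My ^ 2 / ⟪u (l - 1), xh l⟫ ^ 2⌋₊ + 1) :=
  group_fused_lasso_order_lemma_general p m y a b lam My hMy hy hlam₁ G hG xh hmin ha hb Md hMd u hu
    l hl1 hlm
end
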